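/- arXiv:1206.6541 — 4 statements merged into one kernel-verified Lean document; each statement's English description precedes it below -/
import Mathlib

section
/- There is an absolute constant C > 0 such that for all positive integers d, t, m with t ≤ (d−1)/2, if 𝔰 = (S_1,…,S_m) is chosen with the S_i independent and uniform among t-element subsets of {1,…,d−1}, and x is uniform on {0,1}^{d−1} and independent of 𝔰, then Pr_{𝔰,x}[ |T_𝔰(x)| = 1 ] ≥ m·2^{−t}·(1 − m·2^{−t}·exp(C·t²/d)). In particular, if 1/2 ≤ m·2^{−t} and m·2^{−t}·exp(C·t²/d) ≤ 1/2, then Pr_{𝔰,x}[ |T_𝔰(x)| = 1 ] ≥ 1/4. -/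
/-- `Tset 𝔰 x` is the set of indices `i` such that `x_j = 1` for all `j ∈ S_i`. -/
def Tset {n m : ℕ} (𝔰 : Fin m → Finset (Fin n)) (x : Fin n → Bool) : Finset (Fin m) :=
  Finset.univ.filter (fun i => ∀ j ∈ 𝔰 i, x j = true)

open Finset

lemma count_cov {n : ℕ} (S : Finset (Fin n)) :
    (Finset.univ.filter (fun x : Fin n → Bool => ∀ j ∈ S, x j = true)).card
      = 2 ^ (n - S.card) := by
  have h : Finset.univ.filter (fun x : Fin n → Bool => ∀ j ∈ S, x j = true)
      = Fintype.piFinset (fun j => if j ∈ S then {true} else (Finset.univ : Finset Bool)) := by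
    ext x
    simp only [Finset.mem_filter, Fintype.mem_piFinset, Finset.mem_univ, true_and]
    constructor
    · intro h j
      by_cases hj : j ∈ S <;> simp [hj, h j]
    · intro h j hj
      have := h j
      simpa [hj] using this
  rw [h, Fintype.card_piFinset]
  have h2 : ∀ i : Fin n, #(if i ∈ S then ({true} : Finset Bool) else univ)
      = if i ∈ S then 1 else 2 := by
    intro i; split_ifs <;> simp
  simp only [h2]
  rw [Finset.prod_ite, Finset.prod_const, Finset.prod_const]
  simp only [one_pow, one_mul]
  congr 1
  rw [Finset.filter_not, Finset.filter_mem_eq_inter, Finset.univ_inter]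
  rw [Finset.card_sdiff_of_subset (Finset.subset_univ _)]
  simp

lemma count_supersets {n t : ℕ} (B : Finset (Fin n)) (hB : B.card ≤ t) :
    ((Finset.powersetCard t (Finset.univ : Finset (Fin n))).filter (fun S => B ⊆ S)).card
      = (n - B.card).choose (t - B.card) := by
  have hc : (Finset.powersetCard (t - B.card) Bᶜ).card = (n - B.card).choose (t - B.card) := by
    rw [Finset.card_powersetCard, Finset.card_compl, Fintype.card_fin]
  rw [← hc]
  apply Finset.card_bij' (fun S _ => S \ B) (fun D _ => D ∪ B)
  · intro S hS
    simp only [Finset.mem_filter, Finset.mem_powersetCard_univ] at hS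
    rw [Finset.mem_powersetCard]
    constructor
    · intro a ha
      simp only [Finset.mem_sdiff] at ha
      simp [Finset.mem_compl, ha.2]
    · rw [Finset.card_sdiff_of_subset hS.2, hS.1]
  · intro D hD
    rw [Finset.mem_powersetCard] at hD
    have hdisj : Disjoint D B := Finset.disjoint_right.mpr (fun a ha => by
      have := hD.1
      intro haD
      have := this haD
      simp [Finset.mem_compl, ha] at this)
    simp only [Finset.mem_filter, Finset.mem_powersetCard_univ]
    constructor
    · rw [Finset.card_union_of_disjoint hdisj, hD.2]
      omega
    · exact Finset.subset_union_right
  · intro S hS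
    simp only [Finset.mem_filter] at hS
    exact Finset.sdiff_union_of_subset hS.2
  · intro D hD
    rw [Finset.mem_powersetCard] at hD
    have hdisj : Disjoint D B := Finset.disjoint_right.mpr (fun a ha haD => by
      have := hD.1 haD
      simp [Finset.mem_compl, ha] at this)
    exact Finset.union_sdiff_cancel_right hdisj

lemma pow_mul_choose_le {n t : ℕ} (hn : 2 * t ≤ n) :
    ∀ k, k ≤ t → n ^ k * (n - k).choose (t - k) ≤ (2 * t) ^ k * n.choose t := by
  intro k
  induction k with
  | zero => simp
  | succ k ih =>
    intro hk
    have hk' : k ≤ t := by omega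
    have key : n * (n - (k+1)).choose (t - (k+1)) ≤ 2 * t * ((n - k).choose (t - k)) := by
      have hkn : k < n := by omega
      have hkt : k < t := by omega
      have hid : (n - k) * (n - (k+1)).choose (t - (k+1)) = (n - k).choose (t - k) * (t - k) := by
        have := Nat.add_one_mul_choose_eq (n - (k+1)) (t - (k+1))
        have e1 : n - (k+1) + 1 = n - k := by omega
        have e2 : t - (k+1) + 1 = t - k := by omega
        rwa [e1, e2] at this
      have hpos : 0 < t - k := by omega
      apply Nat.le_of_mul_le_mul_right _ hpos
      calc n * (n - (k+1)).choose (t - (k+1)) * (t - k)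
          = (n * (t - k)) * (n - (k+1)).choose (t - (k+1)) := by ring
        _ ≤ (2 * t * (n - k)) * (n - (k+1)).choose (t - (k+1)) := by
            apply Nat.mul_le_mul_right
            have h1 : n * (t - k) + k * n ≤ 2 * t * (n - k) + k * n := by
              have hnk : n - k + k = n := by omega
              have htk : t - k + k = t := by omega
              nlinarith [Nat.mul_le_mul_left k (show 2 * t ≤ n from hn)]
            omega
        _ = 2 * t * ((n - k) * (n - (k+1)).choose (t - (k+1))) := by ring
        _ = 2 * t * ((n - k).choose (t - k) * (t - k)) := by rw [hid]
        _ = 2 * t * (n - k).choose (t - k) * (t - k) := by ring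
    calc n ^ (k+1) * (n - (k+1)).choose (t - (k+1))
        = n ^ k * (n * (n - (k+1)).choose (t - (k+1))) := by ring
      _ ≤ n ^ k * (2 * t * (n - k).choose (t - k)) := Nat.mul_le_mul_left _ key
      _ = 2 * t * (n ^ k * (n - k).choose (t - k)) := by ring
      _ ≤ 2 * t * ((2 * t) ^ k * n.choose t) := Nat.mul_le_mul_left _ (ih hk')
      _ = (2 * t) ^ (k+1) * n.choose t := by ring

lemma key_count {n t : ℕ} (hn : 2 * t ≤ n) :
    (∑ S ∈ Finset.powersetCard t (Finset.univ : Finset (Fin n)),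
      ∑ S' ∈ Finset.powersetCard t (Finset.univ : Finset (Fin n)), 2 ^ (S ∩ S').card) * n ^ t
      ≤ (n.choose t)^2 * (n + 2*t)^t := by
  classical
  have htn : t ≤ n := by omega
  set A := Finset.powersetCard t (Finset.univ : Finset (Fin n)) with hA
  set N : Finset (Fin n) → ℕ := fun B => (A.filter (fun S => B ⊆ S)).card with hN
  -- step 1: rewrite the double sum
  have step1 : ∑ S ∈ A, ∑ S' ∈ A, 2 ^ (S ∩ S').card
      = ∑ B ∈ (Finset.univ : Finset (Finset (Fin n))), (N B)^2 := by
    have h1 : ∀ S S' : Finset (Fin n), 2 ^ (S ∩ S').card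
        = ∑ B ∈ (Finset.univ : Finset (Finset (Fin n))),
            (if B ⊆ S then 1 else 0) * (if B ⊆ S' then 1 else 0) := by
      intro S S'
      have : (S ∩ S').powerset = Finset.univ.filter (fun B => B ⊆ S ∧ B ⊆ S') := by
        ext B
        simp only [Finset.mem_powerset, Finset.mem_filter, Finset.mem_univ, true_and,
          Finset.subset_inter_iff]
      rw [← Finset.card_powerset, this, Finset.card_filter]
      apply Finset.sum_congr rfl
      intro B _
      by_cases h1 : B ⊆ S <;> by_cases h2 : B ⊆ S' <;> simp [h1, h2]
    calc ∑ S ∈ A, ∑ S' ∈ A, 2 ^ (S ∩ S').card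
        = ∑ S ∈ A, ∑ S' ∈ A, ∑ B : Finset (Fin n),
            (if B ⊆ S then 1 else 0) * (if B ⊆ S' then 1 else 0) := by
          apply Finset.sum_congr rfl; intro S _
          apply Finset.sum_congr rfl; intro S' _
          exact h1 S S'
      _ = ∑ S ∈ A, ∑ B : Finset (Fin n), ∑ S' ∈ A,
            (if B ⊆ S then 1 else 0) * (if B ⊆ S' then 1 else 0) := by
          apply Finset.sum_congr rfl; intro S _
          exact Finset.sum_comm
      _ = ∑ B : Finset (Fin n), ∑ S ∈ A, ∑ S' ∈ A,
            (if B ⊆ S then 1 else 0) * (if B ⊆ S' then 1 else 0) := Finset.sum_comm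
      _ = ∑ B ∈ (Finset.univ : Finset (Finset (Fin n))), (N B)^2 := by
          apply Finset.sum_congr rfl; intro B _
          rw [← Finset.sum_mul_sum]
          have : N B = ∑ S ∈ A, (if B ⊆ S then 1 else 0) := Finset.card_filter _ _
          rw [this]; ring
  set c : ℕ → ℕ := fun k => if k ≤ t then (n - k).choose (t - k) else 0 with hc
  have hNB : ∀ B : Finset (Fin n), N B = c (B.card) := by
    intro B
    by_cases h : B.card ≤ t
    · simp only [hc, if_pos h]
      exact count_supersets B h
    · simp only [hc, if_neg h]
      rw [hN]
      simp only
      rw [Finset.card_eq_zero, Finset.filter_eq_empty_iff]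
      intro S hS hBS
      rw [hA, Finset.mem_powersetCard_univ] at hS
      exact h (hS ▸ Finset.card_le_card hBS)
  have step2 : ∑ B ∈ (Finset.univ : Finset (Finset (Fin n))), (N B)^2
      = ∑ k ∈ Finset.range (n+1), n.choose k * (c k)^2 := by
    rw [← Finset.powerset_univ, Finset.powerset_card_disjiUnion]
    refine (Finset.sum_disjiUnion _ _ _).trans ?_
    rw [Finset.card_univ, Fintype.card_fin]
    apply Finset.sum_congr rfl
    intro k _
    have : ∀ B ∈ Finset.powersetCard k (Finset.univ : Finset (Fin n)), (N B)^2 = (c k)^2 := by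
      intro B hB
      rw [Finset.mem_powersetCard_univ] at hB
      rw [hNB B, hB]
    rw [Finset.sum_congr rfl this, Finset.sum_const, Finset.card_powersetCard,
      Finset.card_univ, Fintype.card_fin, smul_eq_mul]
  rw [step1, step2, Finset.sum_mul]
  have step3 : ∀ k ∈ Finset.range (n+1), n.choose k * (c k)^2 * n^t
      ≤ (if k ≤ t then (n.choose t)^2 * ((2*t)^k * n^(t-k) * t.choose k) else 0) := by
    intro k _
    by_cases h : k ≤ t
    · simp only [hc, if_pos h]
      have hpow : n ^ t = n ^ k * n ^ (t - k) := by
        rw [← pow_add]; congr 1; omega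
      have hL3 : n ^ k * (n - k).choose (t - k) ≤ (2*t)^k * n.choose t :=
        pow_mul_choose_le hn k h
      have hid : n.choose t * t.choose k = n.choose k * (n - k).choose (t - k) :=
        Nat.choose_mul (n := n) h
      calc n.choose k * ((n - k).choose (t - k))^2 * n^t
          = (n.choose k * (n - k).choose (t - k)) * (n ^ k * (n - k).choose (t - k))
              * n ^ (t - k) := by rw [hpow]; ring
        _ ≤ (n.choose k * (n - k).choose (t - k)) * ((2*t)^k * n.choose t) * n ^ (t - k) :=
            Nat.mul_le_mul_right _ (Nat.mul_le_mul_left _ hL3)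
        _ = (n.choose t * t.choose k) * ((2*t)^k * n.choose t) * n ^ (t - k) := by rw [hid]
        _ = (n.choose t)^2 * ((2*t)^k * n^(t-k) * t.choose k) := by ring
    · simp [hc, if_neg h]
  calc ∑ k ∈ Finset.range (n+1), n.choose k * (c k)^2 * n^t
      ≤ ∑ k ∈ Finset.range (n+1),
          (if k ≤ t then (n.choose t)^2 * ((2*t)^k * n^(t-k) * t.choose k) else 0) :=
        Finset.sum_le_sum step3
    _ = ∑ k ∈ Finset.range (t+1), (n.choose t)^2 * ((2*t)^k * n^(t-k) * t.choose k) := by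
        rw [← Finset.sum_subset (Finset.range_subset_range.2 (show t+1 ≤ n+1 by omega))]
        · apply Finset.sum_congr rfl
          intro k hk
          rw [Finset.mem_range] at hk
          rw [if_pos (by omega)]
        · intro k _ hk
          rw [Finset.mem_range] at hk
          rw [if_neg (by omega)]
    _ = (n.choose t)^2 * ∑ k ∈ Finset.range (t+1), (2*t)^k * n^(t-k) * t.choose k := by
        rw [Finset.mul_sum]
    _ = (n.choose t)^2 * (2*t + n)^t := by rw [add_pow]; simp
    _ = (n.choose t)^2 * (n + 2*t)^t := by rw [add_comm (2*t) n]

lemma sum_piFinset_eval {m : ℕ} {β : Type*} [DecidableEq β] (A : Finset β) (i : Fin m)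
    (g : β → ℕ) :
    ∑ 𝔰 ∈ Fintype.piFinset (fun _ : Fin m => A), g (𝔰 i)
      = A.card ^ (m - 1) * ∑ S ∈ A, g S := by
  have key := Finset.prod_univ_sum (fun _ : Fin m => A) (fun i' S => if i' = i then g S else 1)
  have h1 : ∀ p : Fin m → β, (∏ i' : Fin m, if i' = i then g (p i') else 1) = g (p i) := by
    intro p
    rw [Finset.prod_ite_eq' Finset.univ i (fun i' => g (p i'))]
    simp
  have h2 : (∏ i' : Fin m, ∑ S ∈ A, if i' = i then g S else 1)
      = A.card ^ (m - 1) * ∑ S ∈ A, g S := by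
    have hfac : ∀ i' : Fin m, (∑ S ∈ A, if i' = i then g S else 1)
        = if i' = i then ∑ S ∈ A, g S else A.card := by
      intro i'; by_cases h : i' = i <;> simp [h]
    simp only [hfac]
    rw [← Finset.mul_prod_erase Finset.univ _ (Finset.mem_univ i)]
    rw [if_pos rfl]
    have : ∀ i' ∈ Finset.univ.erase i, (if i' = i then ∑ S ∈ A, g S else A.card) = A.card := by
      intro i' hi'
      rw [if_neg (Finset.ne_of_mem_erase hi')]
    rw [Finset.prod_congr rfl this, Finset.prod_const, Finset.card_erase_of_mem (Finset.mem_univ i),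
      Finset.card_univ, Fintype.card_fin]
    ring
  rw [← h2, key]
  apply Finset.sum_congr rfl
  intro p _
  exact (h1 p).symm

lemma sum_piFinset_eval_pair {m : ℕ} {β : Type*} [DecidableEq β] (A : Finset β) (i j : Fin m)
    (hij : i ≠ j) (g h : β → ℕ) :
    ∑ 𝔰 ∈ Fintype.piFinset (fun _ : Fin m => A), g (𝔰 i) * h (𝔰 j)
      = A.card ^ (m - 2) * ((∑ S ∈ A, g S) * (∑ S ∈ A, h S)) := by
  have key := Finset.prod_univ_sum (fun _ : Fin m => A)
    (fun i' S => if i' = i then g S else if i' = j then h S else 1)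
  have h1 : ∀ p : Fin m → β,
      (∏ i' : Fin m, if i' = i then g (p i') else if i' = j then h (p i') else 1)
        = g (p i) * h (p j) := by
    intro p
    rw [← Finset.mul_prod_erase Finset.univ _ (Finset.mem_univ i), if_pos rfl]
    rw [← Finset.mul_prod_erase _ _ (Finset.mem_erase.2 ⟨hij.symm, Finset.mem_univ j⟩)]
    rw [if_neg hij.symm, if_pos rfl]
    have : ∀ i' ∈ (Finset.univ.erase i).erase j,
        (if i' = i then g (p i') else if i' = j then h (p i') else 1) = 1 := by
      intro i' hi'
      have h1 := Finset.ne_of_mem_erase hi'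
      have h2 := Finset.ne_of_mem_erase (Finset.mem_of_mem_erase hi')
      rw [if_neg h2, if_neg h1]
    rw [Finset.prod_congr rfl this, Finset.prod_const_one]
    ring
  have h2 : (∏ i' : Fin m, ∑ S ∈ A, if i' = i then g S else if i' = j then h S else 1)
      = A.card ^ (m - 2) * ((∑ S ∈ A, g S) * (∑ S ∈ A, h S)) := by
    have hfac : ∀ i' : Fin m, (∑ S ∈ A, if i' = i then g S else if i' = j then h S else 1)
        = if i' = i then ∑ S ∈ A, g S else if i' = j then ∑ S ∈ A, h S else A.card := by
      intro i'
      by_cases h1 : i' = i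
      · simp [h1]
      · by_cases h2 : i' = j <;> simp [h1, h2]
    simp only [hfac]
    rw [← Finset.mul_prod_erase Finset.univ _ (Finset.mem_univ i), if_pos rfl]
    rw [← Finset.mul_prod_erase _ _ (Finset.mem_erase.2 ⟨hij.symm, Finset.mem_univ j⟩)]
    rw [if_neg hij.symm, if_pos rfl]
    have : ∀ i' ∈ (Finset.univ.erase i).erase j,
        (if i' = i then ∑ S ∈ A, g S else if i' = j then ∑ S ∈ A, h S else A.card) = A.card := by
      intro i' hi'
      have h1 := Finset.ne_of_mem_erase hi'
      have h2 := Finset.ne_of_mem_erase (Finset.mem_of_mem_erase hi')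
      rw [if_neg h2, if_neg h1]
    rw [Finset.prod_congr rfl this, Finset.prod_const]
    rw [Finset.card_erase_of_mem (Finset.mem_erase.2 ⟨hij.symm, Finset.mem_univ j⟩),
      Finset.card_erase_of_mem (Finset.mem_univ i), Finset.card_univ, Fintype.card_fin]
    rw [Nat.sub_sub]
    ring
  rw [← h2, key]
  apply Finset.sum_congr rfl
  intro p _
  exact (h1 p).symm
set_option maxHeartbeats 2000000 in
lemma master (n t m : ℕ) (ht : 0 < t) (hm : 0 < m) (h2t : 2 * t ≤ n) :
    (m : ℝ) * (2:ℝ)⁻¹ ^ t * (1 - (m:ℝ) * (2:ℝ)⁻¹^t * Real.exp (4 * t^2 / (n+1)))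
      ≤ ((((Finset.univ.filter (fun 𝔰 : Fin m → Finset (Fin n) => ∀ i, (𝔰 i).card = t))
            ×ˢ (Finset.univ : Finset (Fin n → Bool))).filter
            (fun p => (Tset p.1 p.2).card = 1)).card : ℝ) /
        (((Finset.univ.filter
            (fun 𝔰 : Fin m → Finset (Fin n) => ∀ i, (𝔰 i).card = t)).card : ℝ) * 2 ^ n) := by
  classical
  set Ω : Finset (Fin m → Finset (Fin n)) :=
    Finset.univ.filter (fun 𝔰 => ∀ i, (𝔰 i).card = t) with hΩdef
  have htn : t ≤ n := by omega
  have hn1 : 1 ≤ n := by omega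
  set A : Finset (Finset (Fin n)) := Finset.powersetCard t Finset.univ with hAdef
  set c : ℕ := n.choose t with hcdef
  have hAcard : A.card = c := by
    rw [hAdef, Finset.card_powersetCard, Finset.card_univ, Fintype.card_fin]
  have hcpos : 0 < c := Nat.choose_pos htn
  have hΩ : Ω = Fintype.piFinset (fun _ : Fin m => A) := by
    ext 𝔰
    simp [hΩdef, Fintype.mem_piFinset, hAdef, Finset.mem_powersetCard_univ]
  have hΩcard : Ω.card = c ^ m := by
    rw [hΩ, Fintype.card_piFinset]
    simp [hAcard]
  set cov : Finset (Fin n) → (Fin n → Bool) → ℕ :=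
    fun S x => if ∀ j ∈ S, x j = true then 1 else 0 with hcov
  set cnt : (Fin n → Bool) → ℕ := fun x => ∑ S ∈ A, cov S x with hcnt
  have hT : ∀ (𝔰 : Fin m → Finset (Fin n)) (x : Fin n → Bool),
      (Tset 𝔰 x).card = ∑ i : Fin m, cov (𝔰 i) x := by
    intro 𝔰 x
    exact Finset.card_filter _ _
  set N1 : ℕ := ((Ω ×ˢ (Finset.univ : Finset (Fin n → Bool))).filter
      (fun p => (Tset p.1 p.2).card = 1)).card with hN1
  set S1 : ℕ := ∑ 𝔰 ∈ Ω, ∑ x : Fin n → Bool, (Tset 𝔰 x).card with hS1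
  set S2 : ℕ := ∑ 𝔰 ∈ Ω, ∑ x : Fin n → Bool, ((Tset 𝔰 x).card)^2 with hS2
  set U : ℕ := ∑ S ∈ A, ∑ S' ∈ A, 2 ^ (S ∩ S').card with hU
  set D : ℕ := m * (m-1) * (c^(m-2) * (2^(n-2*t) * U)) with hD
  have hpt : ∀ k : ℕ, 2*k ≤ (if k = 1 then 1 else 0) + k^2 := by
    intro k
    match k with
    | 0 => simp
    | 1 => simp
    | (k+2) =>
      have h1 : ¬ (k+2 = 1) := by omega
      simp only [if_neg h1]
      nlinarith
  have fact1 : 2 * S1 ≤ N1 + S2 := by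
    have hN1' : N1 = ∑ 𝔰 ∈ Ω, ∑ x : Fin n → Bool,
        (if (Tset 𝔰 x).card = 1 then 1 else 0) := by
      rw [hN1, Finset.card_filter, Finset.sum_product]
    rw [hN1', hS1, hS2, Finset.mul_sum, ← Finset.sum_add_distrib]
    apply Finset.sum_le_sum
    intro 𝔰 _
    rw [Finset.mul_sum, ← Finset.sum_add_distrib]
    apply Finset.sum_le_sum
    intro x _
    exact hpt _
  have hsumcov : ∀ S ∈ A, ∑ x : Fin n → Bool, cov S x = 2^(n-t) := by
    intro S hS
    have hcard : S.card = t := by rwa [hAdef, Finset.mem_powersetCard_univ] at hS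
    have h0 := count_cov S
    rw [hcard] at h0
    rw [hcov]
    simp only
    rw [← Finset.card_filter]
    exact h0
  have hcntsum : ∑ x : Fin n → Bool, cnt x = c * 2^(n-t) := by
    rw [hcnt]
    simp only
    rw [Finset.sum_comm]
    rw [Finset.sum_congr rfl hsumcov, Finset.sum_const, hAcard, smul_eq_mul]
  have fact2 : S1 = m * (c^(m-1) * (c * 2^(n - t))) := by
    have e1 : S1 = ∑ x : Fin n → Bool, ∑ i : Fin m, ∑ 𝔰 ∈ Ω, cov (𝔰 i) x := by
      rw [hS1]
      simp only [hT]
      rw [Finset.sum_comm]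
      apply Finset.sum_congr rfl
      intro x _
      exact Finset.sum_comm
    have e2 : ∀ (x : Fin n → Bool) (i : Fin m),
        ∑ 𝔰 ∈ Ω, cov (𝔰 i) x = c^(m-1) * cnt x := by
      intro x i
      rw [hΩ, sum_piFinset_eval A i (fun S => cov S x), hAcard]
    rw [e1]
    simp only [e2]
    simp only [Finset.sum_const, Finset.card_univ, Fintype.card_fin, smul_eq_mul]
    rw [← Finset.mul_sum, ← Finset.mul_sum, hcntsum]
  have fact3 : S2 = S1 + D := by
    have covmul : ∀ (S S' : Finset (Fin n)) (x : Fin n → Bool),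
        cov S x * cov S' x = cov (S ∪ S') x := by
      intro S S' x
      have hiff : (∀ j ∈ S ∪ S', x j = true)
          ↔ (∀ j ∈ S, x j = true) ∧ (∀ j ∈ S', x j = true) := by
        constructor
        · intro h
          exact ⟨fun j hj => h j (Finset.mem_union_left _ hj),
                 fun j hj => h j (Finset.mem_union_right _ hj)⟩
        · rintro ⟨h1, h2⟩ j hj
          rcases Finset.mem_union.1 hj with h | h
          · exact h1 j h
          · exact h2 j h
      rw [hcov]
      simp only
      by_cases h1 : ∀ j ∈ S, x j = true
      · by_cases h2 : ∀ j ∈ S', x j = true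
        · rw [if_pos h1, if_pos h2, if_pos (hiff.2 ⟨h1, h2⟩), one_mul]
        · rw [if_pos h1, if_neg h2, if_neg (fun h => h2 (hiff.1 h).2), one_mul]
      · rw [if_neg h1, if_neg (fun h => h1 (hiff.1 h).1), zero_mul]
    have covsq : ∀ (S : Finset (Fin n)) (x : Fin n → Bool), cov S x * cov S x = cov S x := by
      intro S x
      rw [hcov]
      simp only
      by_cases h : ∀ j ∈ S, x j = true
      · rw [if_pos h, one_mul]
      · rw [if_neg h, zero_mul]
    -- pointwise decomposition of the square
    have hsq : ∀ (𝔰 : Fin m → Finset (Fin n)) (x : Fin n → Bool),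
        ((Tset 𝔰 x).card)^2 = (Tset 𝔰 x).card
          + ∑ i : Fin m, ∑ i' ∈ Finset.univ.erase i, cov (𝔰 i) x * cov (𝔰 i') x := by
      intro 𝔰 x
      rw [hT, sq, Finset.sum_mul_sum]
      rw [← Finset.sum_add_distrib]
      apply Finset.sum_congr rfl
      intro i _
      rw [← Finset.add_sum_erase _ _ (Finset.mem_univ i), covsq]
    have hQ2 : ∀ S ∈ A, ∀ S' ∈ A,
        ∑ x : Fin n → Bool, cov S x * cov S' x = 2^(n-2*t) * 2^((S ∩ S').card) := by
      intro S hS S' hS'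
      have hcS : S.card = t := by rwa [hAdef, Finset.mem_powersetCard_univ] at hS
      have hcS' : S'.card = t := by rwa [hAdef, Finset.mem_powersetCard_univ] at hS'
      have hui : (S ∪ S').card + (S ∩ S').card = t + t := by
        rw [Finset.card_union_add_card_inter, hcS, hcS']
      have hun : (S ∪ S').card ≤ n := by
        simpa using Finset.card_le_univ (S ∪ S')
      simp only [covmul]
      rw [hcov]
      simp only
      rw [← Finset.card_filter]
      rw [count_cov (S ∪ S')]
      rw [← pow_add]
      congr 1
      omega
    have hcnt2 : ∑ x : Fin n → Bool, cnt x * cnt x = 2^(n-2*t) * U := by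
      rw [hcnt]
      simp only
      calc ∑ x : Fin n → Bool, (∑ S ∈ A, cov S x) * (∑ S' ∈ A, cov S' x)
          = ∑ x : Fin n → Bool, ∑ S ∈ A, ∑ S' ∈ A, cov S x * cov S' x := by
            apply Finset.sum_congr rfl
            intro x _
            rw [Finset.sum_mul_sum]
        _ = ∑ S ∈ A, ∑ x : Fin n → Bool, ∑ S' ∈ A, cov S x * cov S' x := Finset.sum_comm
        _ = ∑ S ∈ A, ∑ S' ∈ A, ∑ x : Fin n → Bool, cov S x * cov S' x := by
            apply Finset.sum_congr rfl
            intro S _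
            exact Finset.sum_comm
        _ = ∑ S ∈ A, ∑ S' ∈ A, 2^(n-2*t) * 2^((S ∩ S').card) := by
            apply Finset.sum_congr rfl
            intro S hS
            apply Finset.sum_congr rfl
            intro S' hS'
            exact hQ2 S hS S' hS'
        _ = ∑ S ∈ A, 2^(n-2*t) * ∑ S' ∈ A, 2^((S ∩ S').card) := by
            apply Finset.sum_congr rfl
            intro S _
            rw [Finset.mul_sum]
        _ = 2^(n-2*t) * U := by rw [← Finset.mul_sum, hU]
    have epair : ∀ (x : Fin n → Bool) (i : Fin m), ∀ i' ∈ Finset.univ.erase i,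
        ∑ 𝔰 ∈ Ω, cov (𝔰 i) x * cov (𝔰 i') x = c^(m-2) * (cnt x * cnt x) := by
      intro x i i' hi'
      have hne : i ≠ i' := (Finset.ne_of_mem_erase hi').symm
      rw [hΩ, sum_piFinset_eval_pair A i i' hne (fun S => cov S x) (fun S => cov S x), hAcard]
    rw [hS2]
    simp only [hsq]
    have edist : (∑ 𝔰 ∈ Ω, ∑ x : Fin n → Bool, ((Tset 𝔰 x).card
            + ∑ i : Fin m, ∑ i' ∈ Finset.univ.erase i, cov (𝔰 i) x * cov (𝔰 i') x))
        = S1 + ∑ 𝔰 ∈ Ω, ∑ x : Fin n → Bool, ∑ i : Fin m, ∑ i' ∈ Finset.univ.erase i,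
            cov (𝔰 i) x * cov (𝔰 i') x := by
      rw [hS1, ← Finset.sum_add_distrib]
      apply Finset.sum_congr rfl
      intro 𝔰 _
      rw [← Finset.sum_add_distrib]
    rw [edist]
    congr 1
    calc ∑ 𝔰 ∈ Ω, ∑ x : Fin n → Bool, ∑ i : Fin m, ∑ i' ∈ Finset.univ.erase i,
            cov (𝔰 i) x * cov (𝔰 i') x
        = ∑ x : Fin n → Bool, ∑ 𝔰 ∈ Ω, ∑ i : Fin m, ∑ i' ∈ Finset.univ.erase i,
            cov (𝔰 i) x * cov (𝔰 i') x := Finset.sum_comm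
      _ = ∑ x : Fin n → Bool, ∑ i : Fin m, ∑ i' ∈ Finset.univ.erase i, ∑ 𝔰 ∈ Ω,
            cov (𝔰 i) x * cov (𝔰 i') x := by
          apply Finset.sum_congr rfl
          intro x _
          rw [Finset.sum_comm]
          apply Finset.sum_congr rfl
          intro i _
          exact Finset.sum_comm
      _ = ∑ x : Fin n → Bool, ∑ i : Fin m, ∑ i' ∈ Finset.univ.erase i,
            c^(m-2) * (cnt x * cnt x) := by
          apply Finset.sum_congr rfl
          intro x _
          apply Finset.sum_congr rfl
          intro i _
          apply Finset.sum_congr rfl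
          intro i' hi'
          exact epair x i i' hi'
      _ = ∑ x : Fin n → Bool, m * (m-1) * (c^(m-2) * (cnt x * cnt x)) := by
          apply Finset.sum_congr rfl
          intro x _
          simp only [Finset.sum_const, Finset.card_erase_of_mem (Finset.mem_univ _),
            Finset.card_univ, Fintype.card_fin, smul_eq_mul]
          ring
      _ = m * (m-1) * (c^(m-2) * ∑ x : Fin n → Bool, cnt x * cnt x) := by
          rw [← Finset.mul_sum, ← Finset.mul_sum]
      _ = D := by rw [hcnt2, hD]
  have fact6 : U * n^t ≤ c^2 * (n + 2*t)^t := key_count h2t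
  have hS1N1D : S1 ≤ N1 + D := by omega
  set E : ℝ := Real.exp (4 * (t:ℝ)^2 / ((n:ℝ)+1)) with hE
  have hE1 : 1 ≤ E := Real.one_le_exp (by positivity)
  have hcR : (0:ℝ) < (c:ℝ) := by exact_mod_cast hcpos
  have hnR : (0:ℝ) < (n:ℝ) := by exact_mod_cast hn1
  set R : ℝ := (c:ℝ)^m * 2^n with hR
  have hRpos : (0:ℝ) < R := by positivity
  set aR : ℝ := (m:ℝ) * (2:ℝ)⁻¹ ^ t with haR
  have haRpos : 0 ≤ aR := by positivity
  -- 2^(n-t) and 2^(n-2t) identities over ℝ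
  have hpow1 : (2:ℝ)^(n-t) * 2^t = 2^n := by
    rw [← pow_add]
    congr 1
    omega
  have hpow2 : (2:ℝ)^(n-2*t) * 2^(2*t) = 2^n := by
    rw [← pow_add]
    congr 1
    omega
  have h2t' : (0:ℝ) < (2:ℝ)^t := by positivity
  have h2t2 : (0:ℝ) < (2:ℝ)^(2*t) := by positivity
  -- S1 / R = aR
  have hS1R : (S1:ℝ) / R = aR := by
    have hS1' : S1 = m * (c^m * 2^(n-t)) := by
      rw [fact2]
      have : c^(m-1) * c = c^m := by
        rw [← pow_succ]
        congr 1
        omega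
      rw [← Nat.mul_assoc (c^(m-1)) c (2^(n-t)), this]
    rw [hS1']
    push_cast
    rw [div_eq_iff (ne_of_gt hRpos), hR, haR, ← hpow1, inv_pow]
    field_simp
  -- U ≤ c^2 * E
  have hUle : (U:ℝ) ≤ (c:ℝ)^2 * E := by
    have hf6 : (U:ℝ) * (n:ℝ)^t ≤ (c:ℝ)^2 * ((n:ℝ) + 2*t)^t := by
      exact_mod_cast fact6
    have hnt : (0:ℝ) < (n:ℝ)^t := by positivity
    have hfrac : ((n:ℝ) + 2*t)^t ≤ (n:ℝ)^t * E := by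
      have hb : (n:ℝ) + 2*t ≤ (n:ℝ) * Real.exp (2*t/(n:ℝ)) := by
        have := Real.add_one_le_exp (2*(t:ℝ)/(n:ℝ))
        calc (n:ℝ) + 2*t = (n:ℝ) * (2*(t:ℝ)/(n:ℝ) + 1) := by field_simp; ring
          _ ≤ (n:ℝ) * Real.exp (2*(t:ℝ)/(n:ℝ)) := by
              apply mul_le_mul_of_nonneg_left this (le_of_lt hnR)
      calc ((n:ℝ) + 2*t)^t ≤ ((n:ℝ) * Real.exp (2*(t:ℝ)/(n:ℝ)))^t := by
            apply pow_le_pow_left₀ (by positivity) hb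
        _ = (n:ℝ)^t * Real.exp (2*(t:ℝ)/(n:ℝ))^t := mul_pow _ _ _
        _ ≤ (n:ℝ)^t * E := by
            apply mul_le_mul_of_nonneg_left _ (le_of_lt hnt)
            rw [← Real.exp_nat_mul, hE]
            apply Real.exp_le_exp.2
            rw [show (t:ℝ) * (2*(t:ℝ)/(n:ℝ)) = 2*(t:ℝ)^2/(n:ℝ) by ring]
            rw [div_le_div_iff₀ hnR (by positivity)]
            nlinarith [sq_nonneg (t:ℝ), (show (1:ℝ) ≤ (n:ℝ) by exact_mod_cast hn1)]
    have := hf6.trans (by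
      calc (c:ℝ)^2 * ((n:ℝ) + 2*t)^t ≤ (c:ℝ)^2 * ((n:ℝ)^t * E) := by
            apply mul_le_mul_of_nonneg_left hfrac (by positivity)
        _ = ((c:ℝ)^2 * E) * (n:ℝ)^t := by ring)
    exact le_of_mul_le_mul_right this hnt
  -- D ≤ aR^2 * E * R
  have hDle : (D:ℝ) ≤ aR^2 * E * R := by
    rcases Nat.lt_or_ge m 2 with hm2 | hm2
    · have hm1 : m = 1 := by omega
      have : D = 0 := by rw [hD, hm1]; simp
      rw [this]
      push_cast
      positivity
    · have hcm : c^(m-2) * c^2 = c^m := by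
        rw [← pow_add]
        congr 1
        omega
      have hDval : (D:ℝ) = (m:ℝ) * (m-1:ℕ) * ((c:ℝ)^(m-2) * ((2:ℝ)^(n-2*t) * U)) := by
        rw [hD]; push_cast; ring
      have hstep : (D:ℝ) ≤ (m:ℝ) * m * ((c:ℝ)^(m-2) * ((2:ℝ)^(n-2*t) * ((c:ℝ)^2 * E))) := by
        rw [hDval]
        have h1 : ((m-1:ℕ):ℝ) ≤ (m:ℝ) := by
          have : (m-1:ℕ) ≤ m := by omega
          exact_mod_cast this
        gcongr
      have heq : (m:ℝ) * m * ((c:ℝ)^(m-2) * ((2:ℝ)^(n-2*t) * ((c:ℝ)^2 * E)))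
          = aR^2 * E * R := by
        rw [haR, hR]
        have hc2 : ((c:ℝ)^(m-2)) * (c:ℝ)^2 = (c:ℝ)^m := by
          rw [← pow_add]
          congr 1
          omega
        have hinv : ((2:ℝ)⁻¹^t)^2 * (2:ℝ)^n = (2:ℝ)^(n-2*t) := by
          rw [← hpow2]
          have : ((2:ℝ)⁻¹^t)^2 = ((2:ℝ)^(2*t))⁻¹ := by
            rw [← pow_mul, ← inv_pow]
            congr 1
            ring
          rw [this]
          field_simp
        calc (m:ℝ) * m * ((c:ℝ)^(m-2) * ((2:ℝ)^(n-2*t) * ((c:ℝ)^2 * E)))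
            = (m:ℝ) * m * ((2:ℝ)^(n-2*t)) * E * ((c:ℝ)^(m-2) * (c:ℝ)^2) := by ring
          _ = (m:ℝ) * m * (((2:ℝ)⁻¹^t)^2 * (2:ℝ)^n) * E * (c:ℝ)^m := by rw [hc2, hinv]
          _ = ((m:ℝ) * (2:ℝ)⁻¹^t)^2 * E * ((c:ℝ)^m * 2^n) := by ring
      exact hstep.trans_eq heq
  -- final assembly
  have hN1D : (S1:ℝ) ≤ (N1:ℝ) + (D:ℝ) := by exact_mod_cast hS1N1D
  have hgoal : aR * (1 - aR * E) ≤ (N1:ℝ) / R := by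
    have hDR : (D:ℝ)/R ≤ aR^2 * E := by
      rw [div_le_iff₀ hRpos]
      exact hDle
    calc aR * (1 - aR * E) = aR - aR^2 * E := by ring
      _ ≤ (S1:ℝ)/R - (D:ℝ)/R := by rw [hS1R]; linarith
      _ = ((S1:ℝ) - D)/R := (sub_div _ _ _).symm
      _ ≤ (N1:ℝ)/R := by
          apply (div_le_div_iff_of_pos_right hRpos).2
          linarith
  rw [hΩcard]
  push_cast
  exact hgoal

/-- There is an absolute constant `C > 0` such that for all `d, t, m` with `t ≤ (d−1)/2`,
for `𝔰 = (S_1,…,S_m)` independent uniform `t`-element subsets of `{1,…,d−1}` and `x`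
uniform on `{0,1}^{d−1}` independent of `𝔰`,
`Pr[|T_𝔰(x)| = 1] ≥ m·2^{−t}·(1 − m·2^{−t}·exp(C·t²/d))`; in particular, if
`1/2 ≤ m·2^{−t}` and `m·2^{−t}·exp(C·t²/d) ≤ 1/2`, then `Pr[|T_𝔰(x)| = 1] ≥ 1/4`. -/
theorem prob_Tset_card_one :
    ∃ C : ℝ, 0 < C ∧ ∀ d t m : ℕ, 0 < d → 0 < t → 0 < m → 2 * t ≤ d - 1 →
      let Ω : Finset (Fin m → Finset (Fin (d - 1))) :=
        Finset.univ.filter (fun 𝔰 => ∀ i, (𝔰 i).card = t)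
      let Pr1 : ℝ :=
        (((Ω ×ˢ (Finset.univ : Finset (Fin (d - 1) → Bool))).filter
            (fun p => (Tset p.1 p.2).card = 1)).card : ℝ) / ((Ω.card : ℝ) * 2 ^ (d - 1))
      ((m : ℝ) * (2 : ℝ)⁻¹ ^ t
          * (1 - (m : ℝ) * (2 : ℝ)⁻¹ ^ t * Real.exp (C * t ^ 2 / d)) ≤ Pr1) ∧
      ((1 / 2 ≤ (m : ℝ) * (2 : ℝ)⁻¹ ^ t ∧
          (m : ℝ) * (2 : ℝ)⁻¹ ^ t * Real.exp (C * t ^ 2 / d) ≤ 1 / 2) →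
        1 / 4 ≤ Pr1) := by
  classical
  refine ⟨4, by norm_num, ?_⟩
  intro d t m hd ht hm h2t
  intro Ω Pr1
  have hcast : ((d - 1 : ℕ) : ℝ) + 1 = (d : ℝ) := by
    have h : d - 1 + 1 = d := by omega
    exact_mod_cast h
  have hmain := master (d-1) t m ht hm h2t
  rw [hcast] at hmain
  constructor
  · exact hmain
  · rintro ⟨h1, h2⟩
    have hE1 : 1 ≤ Real.exp (4 * (t:ℝ)^2 / d) := Real.one_le_exp (by positivity)
    have ha0 : (0:ℝ) ≤ (m:ℝ) * (2:ℝ)⁻¹^t := by positivity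
    have hkey := mul_le_mul h1
      (show (1:ℝ)/2 ≤ 1 - (m:ℝ)*(2:ℝ)⁻¹^t * Real.exp (4*(t:ℝ)^2/(d:ℝ)) by linarith)
      (by norm_num) (le_trans (by norm_num) h1)
    nlinarith [hmain, hkey]
end

section
/- There is an absolute constant C > 0 such that for all positive integers d, t, m with t ≤ (d−1)/2, if 𝔰 = (S_1,…,S_m) is chosen with the S_i independent and uniform among t-element subsets of {1,…,d−1}, and x is uniform on {0,1}^{d−1} and independent of 𝔰, then E_{𝔰,x}[ |T_𝔰(x)|·(|T_𝔰(x)| − 1) ] ≤ (m·2^{−t})²·exp(C·t²/d). -/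
open Finset

-- ℕ inequality: C(n-k, t-k) * n^k ≤ C(n,t) * t^k
lemma choose_mul_pow_le {n t : ℕ} (ht : t ≤ n) : ∀ k, k ≤ t →
    Nat.choose (n - k) (t - k) * n ^ k ≤ Nat.choose n t * t ^ k := by
  intro k
  induction k with
  | zero => simp
  | succ k ih =>
    intro hk1
    have hk : k ≤ t := Nat.le_of_succ_le hk1
    have hkt : k < t := hk1
    have hkn : k < n := lt_of_lt_of_le hkt ht
    have hid : (n - k) * Nat.choose (n - k - 1) (t - k - 1)
        = Nat.choose (n - k) (t - k) * (t - k) := by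
      have h1 : n - k = (n - k - 1) + 1 := by omega
      have h2 : t - k = (t - k - 1) + 1 := by omega
      rw [h1, h2]
      exact Nat.add_one_mul_choose_eq (n - k - 1) (t - k - 1)
    have key : (n - k) * (Nat.choose (n - (k+1)) (t - (k+1)) * n ^ (k+1))
        ≤ (n - k) * (Nat.choose n t * t ^ (k+1)) := by
      have e1 : (n - k) * (Nat.choose (n - (k+1)) (t - (k+1)) * n ^ (k+1))
          = (t - k) * n * (Nat.choose (n - k) (t - k) * n ^ k) := by
        have : n - (k+1) = n - k - 1 := by omega
        rw [this]
        have : t - (k+1) = t - k - 1 := by omega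
        rw [this, pow_succ]
        calc (n - k) * (Nat.choose (n - k - 1) (t - k - 1) * (n ^ k * n))
            = ((n - k) * Nat.choose (n - k - 1) (t - k - 1)) * (n ^ k * n) := by ring
          _ = (Nat.choose (n - k) (t - k) * (t - k)) * (n ^ k * n) := by rw [hid]
          _ = (t - k) * n * (Nat.choose (n - k) (t - k) * n ^ k) := by ring
      rw [e1]
      have h2 : (t - k) * n * (Nat.choose (n - k) (t - k) * n ^ k)
          ≤ (t - k) * n * (Nat.choose n t * t ^ k) :=
        Nat.mul_le_mul_left _ (ih hk)
      refine h2.trans ?_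
      have h3 : (t - k) * n ≤ (n - k) * t := by
        have : k * t ≤ k * n := Nat.mul_le_mul_left k ht
        rw [Nat.sub_mul, Nat.sub_mul, mul_comm t n]
        exact Nat.sub_le_sub_left this _
      calc (t - k) * n * (Nat.choose n t * t ^ k)
          ≤ (n - k) * t * (Nat.choose n t * t ^ k) :=
            Nat.mul_le_mul_right _ h3
        _ = (n - k) * (Nat.choose n t * t ^ (k+1)) := by rw [pow_succ]; ring
    exact Nat.le_of_mul_le_mul_left key (by omega)

-- number of t-subsets of Fin n containing R is at most C(n - |R|, t - |R|)
lemma count_supersets_le {n t : ℕ} (R : Finset (Fin n)) :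
    ((powersetCard t (univ : Finset (Fin n))).filter (fun S' => R ⊆ S')).card
      ≤ Nat.choose (n - R.card) (t - R.card) := by
  have h := Finset.card_le_card_of_injOn (fun S' => S' \ R)
    (s := (powersetCard t (univ : Finset (Fin n))).filter (fun S' => R ⊆ S'))
    (t := powersetCard (t - R.card) ((univ : Finset (Fin n)) \ R))
    (by
      intro S' hS'
      simp only [mem_coe, mem_filter, mem_powersetCard_univ] at hS'
      rw [mem_coe, mem_powersetCard]
      exact ⟨sdiff_subset_sdiff (subset_univ _) le_rfl,
        by rw [card_sdiff_of_subset hS'.2, hS'.1]⟩)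
    (by
      intro a ha b hb hab
      simp only [coe_filter, Set.mem_setOf_eq, mem_powersetCard_univ] at ha hb
      have : a \ R ∪ R = b \ R ∪ R := by simp only at hab; rw [hab]
      rwa [sdiff_union_of_subset ha.2, sdiff_union_of_subset hb.2] at this)
  rwa [card_powersetCard, card_sdiff_of_subset (subset_univ R), card_univ, Fintype.card_fin] at h

-- core: ∑_{S' ∈ t-subsets} 2^{|S ∩ S'|} ≤ C(n,t) (1 + t/n)^t
lemma sum_two_pow_inter_le {n t : ℕ} (hn : 0 < n) (ht : t ≤ n) {S : Finset (Fin n)}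
    (hS : S.card = t) :
    ∑ S' ∈ powersetCard t (univ : Finset (Fin n)), (2:ℝ) ^ (S ∩ S').card
      ≤ (Nat.choose n t : ℝ) * (1 + (t : ℝ) / n) ^ t := by
  have step1 : ∀ S' : Finset (Fin n), (2:ℝ) ^ (S ∩ S').card
      = ∑ R ∈ S.powerset, (if R ⊆ S' then (1:ℝ) else 0) := by
    intro S'
    rw [Finset.sum_boole]
    have hfe : S.powerset.filter (fun R => R ⊆ S') = (S ∩ S').powerset := by
      ext R
      simp only [mem_filter, mem_powerset, subset_inter_iff]
    rw [hfe, card_powerset]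
    push_cast
    ring
  calc ∑ S' ∈ powersetCard t (univ : Finset (Fin n)), (2:ℝ) ^ (S ∩ S').card
      = ∑ R ∈ S.powerset, ∑ S' ∈ powersetCard t (univ : Finset (Fin n)),
          (if R ⊆ S' then (1:ℝ) else 0) := by
        rw [Finset.sum_comm]
        exact Finset.sum_congr rfl fun S' _ => step1 S'
    _ ≤ ∑ R ∈ S.powerset, (Nat.choose (n - R.card) (t - R.card) : ℝ) := by
        refine Finset.sum_le_sum fun R _ => ?_
        rw [Finset.sum_boole]
        exact Nat.cast_le.mpr (count_supersets_le R)
    _ = ∑ k ∈ Finset.range (t + 1),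
          Nat.choose t k • (Nat.choose (n - k) (t - k) : ℝ) := by
        rw [← hS]
        exact Finset.sum_powerset_apply_card (fun k => ((Nat.choose (n - k) (S.card - k) : ℕ) : ℝ))
    _ ≤ ∑ k ∈ Finset.range (t + 1),
          (Nat.choose t k : ℝ) * ((Nat.choose n t : ℝ) * ((t : ℝ) / n) ^ k) := by
        refine Finset.sum_le_sum fun k hk => ?_
        rw [nsmul_eq_mul]
        refine mul_le_mul_of_nonneg_left ?_ (by positivity)
        have hkt : k ≤ t := by simpa [Nat.lt_succ_iff] using hk
        have h := choose_mul_pow_le ht k hkt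
        have hnk : (0:ℝ) < (n:ℝ) ^ k := by positivity
        rw [div_pow, ← mul_div_assoc, le_div_iff₀ hnk]
        calc (Nat.choose (n-k) (t-k) : ℝ) * (n:ℝ)^k
            = ((Nat.choose (n-k) (t-k) * n ^ k : ℕ) : ℝ) := by push_cast; ring
          _ ≤ ((Nat.choose n t * t ^ k : ℕ) : ℝ) := Nat.cast_le.mpr h
          _ = (Nat.choose n t : ℝ) * ((t:ℝ))^k := by push_cast; ring
    _ = (Nat.choose n t : ℝ) * (1 + (t : ℝ) / n) ^ t := by
        rw [add_comm (1:ℝ), add_pow]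
        rw [Finset.mul_sum]
        refine Finset.sum_congr rfl fun k hk => ?_
        simp [mul_comm, mul_assoc, mul_left_comm]

/-- real-valued indicator that all coordinates in `S` are on -/
noncomputable def ind {n : ℕ} (S : Finset (Fin n)) (x : Fin n → Bool) : ℝ :=
  if ∀ j ∈ S, x j = true then 1 else 0

lemma ind_nonneg {n : ℕ} (S : Finset (Fin n)) (x : Fin n → Bool) : 0 ≤ ind S x := by
  unfold ind; split <;> norm_num

lemma ind_mul_ind {n : ℕ} (S S' : Finset (Fin n)) (x : Fin n → Bool) :
    ind S x * ind S' x = ind (S ∪ S') x := by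
  unfold ind
  rw [if_congr Finset.forall_mem_union rfl rfl]
  by_cases h : ∀ j ∈ S, x j = true
  · by_cases h2 : ∀ j ∈ S', x j = true
    · rw [if_pos h, if_pos h2, if_pos ⟨h, h2⟩, mul_one]
    · have hcc : ¬((∀ j ∈ S, x j = true) ∧ ∀ j ∈ S', x j = true) := fun hc => h2 hc.2
      rw [if_pos h, if_neg h2, if_neg hcc, mul_zero]
  · have hcc : ¬((∀ j ∈ S, x j = true) ∧ ∀ j ∈ S', x j = true) := fun hc => h hc.1
    rw [if_neg h, if_neg hcc, zero_mul]

lemma card_filter_allon {n : ℕ} (S : Finset (Fin n)) :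
    ((univ : Finset (Fin n → Bool)).filter (fun x => ∀ j ∈ S, x j = true)).card
      = 2 ^ (n - S.card) := by
  have he : (univ : Finset (Fin n → Bool)).filter (fun x => ∀ j ∈ S, x j = true)
      = Fintype.piFinset (fun j => if j ∈ S then ({true} : Finset Bool) else univ) := by
    ext x
    simp only [mem_filter, mem_univ, true_and, Fintype.mem_piFinset]
    constructor
    · intro h j
      by_cases hj : j ∈ S <;> simp [hj, h]
    · intro h j hj
      have := h j
      simpa [hj] using this
  rw [he, Fintype.card_piFinset]
  have : ∀ j : Fin n, (if j ∈ S then ({true} : Finset Bool) else univ).card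
      = if j ∈ S then 1 else 2 := by
    intro j; split <;> simp
  rw [Finset.prod_congr rfl fun j _ => this j, Finset.prod_ite, Finset.prod_const,
    Finset.prod_const, one_pow, one_mul]
  congr 1
  have : (univ.filter (fun j => ¬ j ∈ S)) = Sᶜ := by
    ext j; simp [Finset.mem_compl]
  rw [this, Finset.card_compl, Fintype.card_fin]

lemma sum_ind {n : ℕ} (S : Finset (Fin n)) :
    ∑ x : Fin n → Bool, ind S x = (2:ℝ) ^ (n - S.card) := by
  unfold ind
  rw [Finset.sum_boole, card_filter_allon]
  push_cast
  ring

lemma main_bound (n t m : ℕ) (ht : 0 < t) (hm : 0 < m) (h2t : 2 * t ≤ n) :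
    (∑ p ∈ ((univ : Finset (Fin m → Finset (Fin n))).filter
        (fun 𝔰 => ∀ i, (𝔰 i).card = t)) ×ˢ (univ : Finset (Fin n → Bool)),
          ((Tset p.1 p.2).card : ℝ) * (((Tset p.1 p.2).card : ℝ) - 1))
        / ((((univ : Finset (Fin m → Finset (Fin n))).filter
            (fun 𝔰 => ∀ i, (𝔰 i).card = t)).card : ℝ) * 2 ^ n)
      ≤ ((m : ℝ) * (2 : ℝ)⁻¹ ^ t) ^ 2 * (1 + (t : ℝ) / n) ^ t := by
  have htn : t ≤ n := by omega
  have hn0 : 0 < n := by omega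
  set Ω : Finset (Fin m → Finset (Fin n)) :=
    (univ : Finset (Fin m → Finset (Fin n))).filter (fun 𝔰 => ∀ i, (𝔰 i).card = t) with hΩdef
  set 𝒮 : Finset (Finset (Fin n)) := powersetCard t (univ : Finset (Fin n)) with h𝒮
  have hΩ : Ω = Fintype.piFinset (fun _ : Fin m => 𝒮) := by
    ext 𝔰
    simp [hΩdef, h𝒮, Fintype.mem_piFinset, mem_powersetCard_univ]
  have hc : 𝒮.card = Nat.choose n t := by
    rw [h𝒮, card_powersetCard, card_univ, Fintype.card_fin]
  have hc0 : (0:ℝ) < (Nat.choose n t : ℝ) := by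
    exact_mod_cast Nat.choose_pos htn
  have hΩcard : Ω.card = Nat.choose n t ^ m := by
    rw [hΩ, Fintype.card_piFinset]
    simp [hc]
  set N : (Fin n → Bool) → ℝ := fun x => ∑ S ∈ 𝒮, ind S x with hN
  -- Tset.card as a sum of indicators
  have hT : ∀ (𝔰 : Fin m → Finset (Fin n)) (x), ((Tset 𝔰 x).card : ℝ) = ∑ i, ind (𝔰 i) x := by
    intro 𝔰 x
    rw [Tset, Finset.card_filter]
    push_cast [ind]
    rfl
  have hTT : ∀ (𝔰 : Fin m → Finset (Fin n)) (x), ((Tset 𝔰 x).card : ℝ) * (((Tset 𝔰 x).card : ℝ) - 1)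
      = ∑ p ∈ (univ : Finset (Fin m)).offDiag, ind (𝔰 p.1) x * ind (𝔰 p.2) x := by
    intro 𝔰 x
    rw [hT]
    have hsq : (∑ i, ind (𝔰 i) x) * (∑ i, ind (𝔰 i) x)
        = (∑ p ∈ (univ : Finset (Fin m)).diag, ind (𝔰 p.1) x * ind (𝔰 p.2) x)
          + ∑ p ∈ (univ : Finset (Fin m)).offDiag, ind (𝔰 p.1) x * ind (𝔰 p.2) x := by
      rw [Finset.sum_mul_sum, ← Finset.sum_product', ← Finset.diag_union_offDiag,
        Finset.sum_union (Finset.disjoint_diag_offDiag _)]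
    have hdiag : (∑ p ∈ (univ : Finset (Fin m)).diag, ind (𝔰 p.1) x * ind (𝔰 p.2) x)
        = ∑ i, ind (𝔰 i) x := by
      rw [Finset.sum_diag]
      refine Finset.sum_congr rfl fun i _ => ?_
      unfold ind
      split <;> norm_num
    nlinarith [hsq, hdiag]
  -- sum over Ω for a fixed off-diagonal pair and fixed x
  have hpair : ∀ p : Fin m × Fin m, p ∈ (univ : Finset (Fin m)).offDiag →
      ∀ x : Fin n → Bool,
      ∑ 𝔰 ∈ Ω, ind (𝔰 p.1) x * ind (𝔰 p.2) x
        = (Nat.choose n t : ℝ) ^ (m - 2) * (N x * N x) := by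
    rintro ⟨i, j⟩ hp x
    have hij : i ≠ j := (Finset.mem_offDiag.mp hp).2.2
    rw [hΩ]
    set g : Fin m → Finset (Fin n) → ℝ := fun k S => if k = i ∨ k = j then ind S x else 1
      with hg
    have hjmem : j ∈ (univ : Finset (Fin m)).erase i :=
      Finset.mem_erase.mpr ⟨hij.symm, mem_univ j⟩
    have hone : ∀ k ∈ ((univ : Finset (Fin m)).erase i).erase j, ∀ S : Finset (Fin n),
        g k S = 1 := by
      intro k hk S
      have hk2 := Finset.mem_erase.mp hk
      have hk3 := Finset.mem_erase.mp hk2.2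
      simp [hg, hk2.1, hk3.1]
    have hprod : ∀ 𝔰 : Fin m → Finset (Fin n),
        ind (𝔰 i) x * ind (𝔰 j) x = ∏ k, g k (𝔰 k) := by
      intro 𝔰
      have h1 : ∏ k ∈ ((univ : Finset (Fin m)).erase i).erase j, g k (𝔰 k) = 1 :=
        Finset.prod_eq_one fun k hk => hone k hk (𝔰 k)
      rw [← Finset.mul_prod_erase univ _ (mem_univ i),
        ← Finset.mul_prod_erase _ _ hjmem, h1, mul_one]
      simp [hg]
    have hsum2 : ∀ k : Fin m, (∑ S ∈ 𝒮, g k S)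
        = if k = i ∨ k = j then N x else (Nat.choose n t : ℝ) := by
      intro k
      by_cases hk : k = i ∨ k = j <;> simp [hg, hk, hN, hc]
    calc ∑ 𝔰 ∈ Fintype.piFinset (fun _ : Fin m => 𝒮), ind (𝔰 i) x * ind (𝔰 j) x
        = ∑ 𝔰 ∈ Fintype.piFinset (fun _ : Fin m => 𝒮), ∏ k, g k (𝔰 k) :=
          Finset.sum_congr rfl fun 𝔰 _ => hprod 𝔰
      _ = ∏ k, ∑ S ∈ 𝒮, g k S := Finset.sum_prod_piFinset 𝒮 g
      _ = ∏ k, (if k = i ∨ k = j then N x else (Nat.choose n t : ℝ)) :=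
          Finset.prod_congr rfl fun k _ => hsum2 k
      _ = (Nat.choose n t : ℝ) ^ (m - 2) * (N x * N x) := by
          rw [← Finset.mul_prod_erase univ _ (mem_univ i),
            ← Finset.mul_prod_erase _ _ hjmem]
          have e1 : (if i = i ∨ i = j then N x else (Nat.choose n t : ℝ)) = N x := by simp
          have e2 : (if j = i ∨ j = j then N x else (Nat.choose n t : ℝ)) = N x := by simp
          have e3 : ∏ k ∈ ((univ : Finset (Fin m)).erase i).erase j,
              (if k = i ∨ k = j then N x else (Nat.choose n t : ℝ))
              = (Nat.choose n t : ℝ) ^ (m - 2) := by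
            have hval : ∀ k ∈ ((univ : Finset (Fin m)).erase i).erase j,
                (if k = i ∨ k = j then N x else (Nat.choose n t : ℝ))
                  = (Nat.choose n t : ℝ) := by
              intro k hk
              have hk2 := Finset.mem_erase.mp hk
              have hk3 := Finset.mem_erase.mp hk2.2
              simp [hk2.1, hk3.1]
            rw [Finset.prod_congr rfl hval, Finset.prod_const,
              Finset.card_erase_of_mem hjmem, Finset.card_erase_of_mem (mem_univ i),
              card_univ, Fintype.card_fin]
            congr 1
          rw [e1, e2, e3]
          ring

  have hNnn : ∀ x, 0 ≤ N x := fun x => Finset.sum_nonneg fun S _ => ind_nonneg S x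
  have hQ0 : (0:ℝ) ≤ ∑ x : Fin n → Bool, N x * N x :=
    Finset.sum_nonneg fun x _ => mul_nonneg (hNnn x) (hNnn x)
  -- second moment of N
  have hQ : ∑ x : Fin n → Bool, N x * N x
      ≤ (Nat.choose n t : ℝ)^2 * ((2:ℝ)^(n - 2*t) * (1 + (t:ℝ)/n)^t) := by
    have e1 : ∀ x, N x * N x = ∑ S ∈ 𝒮, ∑ S' ∈ 𝒮, ind S x * ind S' x := by
      intro x
      rw [hN]
      exact Finset.sum_mul_sum 𝒮 𝒮 (fun S => ind S x) (fun S => ind S x)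
    calc ∑ x : Fin n → Bool, N x * N x
        = ∑ S ∈ 𝒮, ∑ S' ∈ 𝒮, ∑ x : Fin n → Bool, ind S x * ind S' x := by
          rw [Finset.sum_congr rfl fun x _ => e1 x, Finset.sum_comm]
          exact Finset.sum_congr rfl fun S _ => Finset.sum_comm
      _ = ∑ S ∈ 𝒮, ∑ S' ∈ 𝒮, (2:ℝ)^(n - (S ∪ S').card) := by
          refine Finset.sum_congr rfl fun S _ => Finset.sum_congr rfl fun S' _ => ?_
          calc ∑ x : Fin n → Bool, ind S x * ind S' x
              = ∑ x : Fin n → Bool, ind (S ∪ S') x :=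
                Finset.sum_congr rfl fun x _ => ind_mul_ind S S' x
            _ = (2:ℝ)^(n - (S ∪ S').card) := sum_ind (S ∪ S')
      _ = ∑ S ∈ 𝒮, ∑ S' ∈ 𝒮, (2:ℝ)^(n - 2*t) * (2:ℝ)^((S ∩ S').card) := by
          refine Finset.sum_congr rfl fun S hS => Finset.sum_congr rfl fun S' hS' => ?_
          have hScard : S.card = t := (mem_powersetCard_univ).mp hS
          have hS'card : S'.card = t := (mem_powersetCard_univ).mp hS'
          have h1 := Finset.card_union_add_card_inter S S'
          have h2 : (S ∪ S').card ≤ n := by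
            simpa using Finset.card_le_univ (S ∪ S')
          have hcardeq : n - (S ∪ S').card = (n - 2*t) + (S ∩ S').card := by omega
          rw [hcardeq, pow_add]
      _ ≤ ∑ S ∈ 𝒮, (2:ℝ)^(n - 2*t) * ((Nat.choose n t : ℝ) * (1 + (t:ℝ)/n)^t) := by
          refine Finset.sum_le_sum fun S hS => ?_
          have hScard : S.card = t := (mem_powersetCard_univ).mp hS
          rw [← Finset.mul_sum]
          exact mul_le_mul_of_nonneg_left (sum_two_pow_inter_le hn0 htn hScard)
            (by positivity)
      _ = (Nat.choose n t : ℝ)^2 * ((2:ℝ)^(n - 2*t) * (1 + (t:ℝ)/n)^t) := by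
          rw [Finset.sum_const, hc, nsmul_eq_mul]
          ring
  -- total sum identity
  have hTotal : (∑ p ∈ Ω ×ˢ (univ : Finset (Fin n → Bool)),
        ((Tset p.1 p.2).card : ℝ) * (((Tset p.1 p.2).card : ℝ) - 1))
      = (((univ : Finset (Fin m)).offDiag.card : ℕ) : ℝ)
        * ((Nat.choose n t : ℝ) ^ (m - 2) * ∑ x : Fin n → Bool, N x * N x) := by
    rw [Finset.sum_product]
    calc ∑ 𝔰 ∈ Ω, ∑ x : Fin n → Bool,
            ((Tset 𝔰 x).card : ℝ) * (((Tset 𝔰 x).card : ℝ) - 1)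
        = ∑ 𝔰 ∈ Ω, ∑ x : Fin n → Bool, ∑ p ∈ (univ : Finset (Fin m)).offDiag,
            ind (𝔰 p.1) x * ind (𝔰 p.2) x :=
          Finset.sum_congr rfl fun 𝔰 _ => Finset.sum_congr rfl fun x _ => hTT 𝔰 x
      _ = ∑ p ∈ (univ : Finset (Fin m)).offDiag, ∑ x : Fin n → Bool, ∑ 𝔰 ∈ Ω,
            ind (𝔰 p.1) x * ind (𝔰 p.2) x := by
          rw [Finset.sum_congr rfl fun 𝔰 (_ : 𝔰 ∈ Ω) => Finset.sum_comm, Finset.sum_comm]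
          exact Finset.sum_congr rfl fun p _ => Finset.sum_comm
      _ = ∑ p ∈ (univ : Finset (Fin m)).offDiag, ∑ x : Fin n → Bool,
            (Nat.choose n t : ℝ) ^ (m - 2) * (N x * N x) :=
          Finset.sum_congr rfl fun p hp => Finset.sum_congr rfl fun x _ => hpair p hp x
      _ = (((univ : Finset (Fin m)).offDiag.card : ℕ) : ℝ)
          * ((Nat.choose n t : ℝ) ^ (m - 2) * ∑ x : Fin n → Bool, N x * N x) := by
          rw [Finset.sum_congr rfl fun (p : Fin m × Fin m)
              (_ : p ∈ (univ : Finset (Fin m)).offDiag) =>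
            (Finset.mul_sum (univ : Finset (Fin n → Bool)) (fun x => N x * N x)
              ((Nat.choose n t : ℝ) ^ (m - 2))).symm]
          rw [Finset.sum_const, nsmul_eq_mul]
  have hDpos : (0:ℝ) < ((Ω.card : ℝ) * 2 ^ n) := by
    rw [hΩcard]
    refine mul_pos ?_ (by positivity)
    exact_mod_cast pow_pos (Nat.choose_pos htn) m
  rw [div_le_iff₀ hDpos, hTotal, hΩcard]
  by_cases hm2 : 2 ≤ m
  · -- main case
    have hoff : (((univ : Finset (Fin m)).offDiag.card : ℕ) : ℝ) ≤ (m:ℝ)^2 := by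
      rw [Finset.offDiag_card, card_univ, Fintype.card_fin]
      calc ((m*m - m : ℕ):ℝ) ≤ ((m*m : ℕ):ℝ) := Nat.cast_le.mpr (Nat.sub_le _ _)
        _ = (m:ℝ)^2 := by push_cast; ring
    have step1 : (((univ : Finset (Fin m)).offDiag.card : ℕ) : ℝ)
          * ((Nat.choose n t : ℝ) ^ (m - 2) * ∑ x : Fin n → Bool, N x * N x)
        ≤ (m:ℝ)^2 * ((Nat.choose n t : ℝ) ^ (m - 2)
            * ((Nat.choose n t : ℝ)^2 * ((2:ℝ)^(n - 2*t) * (1 + (t:ℝ)/n)^t))) := by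
      refine mul_le_mul hoff (mul_le_mul_of_nonneg_left hQ (by positivity)) ?_ (by positivity)
      exact mul_nonneg (by positivity) hQ0
    refine step1.trans (le_of_eq ?_)
    have hcpow : (Nat.choose n t : ℝ)^(m-2) * (Nat.choose n t : ℝ)^2
        = (Nat.choose n t : ℝ)^m := by
      rw [← pow_add]
      congr 1
      omega
    have hpow2 : (2:ℝ)^(n - 2*t) = 2^n * ((2:ℝ)⁻¹)^(2*t) := by
      have h2 : ((2:ℝ)^(2*t)) ≠ 0 := by positivity
      have he : (2:ℝ)^(n - 2*t) * 2^(2*t) = 2^n := by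
        rw [← pow_add]
        congr 1
        omega
      rw [inv_pow, mul_comm ((2:ℝ)^n), inv_mul_eq_div, eq_div_iff h2]
      exact he
    calc (m:ℝ)^2 * ((Nat.choose n t : ℝ) ^ (m - 2)
            * ((Nat.choose n t : ℝ)^2 * ((2:ℝ)^(n - 2*t) * (1 + (t:ℝ)/n)^t)))
        = ((Nat.choose n t : ℝ)^(m-2) * (Nat.choose n t : ℝ)^2)
            * ((m:ℝ)^2 * ((2:ℝ)^(n - 2*t) * (1 + (t:ℝ)/n)^t)) := by ring
      _ = (Nat.choose n t : ℝ)^m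
            * ((m:ℝ)^2 * ((2^n * ((2:ℝ)⁻¹)^(2*t)) * (1 + (t:ℝ)/n)^t)) := by
          rw [hcpow, hpow2]
      _ = ((m : ℝ) * (2 : ℝ)⁻¹ ^ t) ^ 2 * (1 + (t : ℝ) / n) ^ t
            * (((Nat.choose n t ^ m : ℕ) : ℝ) * 2 ^ n) := by
          push_cast
          rw [mul_pow, ← pow_mul, mul_comm t 2]
          ring
  · -- degenerate case m = 1
    have hm1 : m = 1 := by omega
    subst hm1
    have hoff0 : ((univ : Finset (Fin 1)).offDiag.card : ℕ) = 0 := by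
      rw [Finset.offDiag_card, card_univ, Fintype.card_fin]
    rw [hoff0]
    push_cast
    rw [zero_mul]
    positivity



/-- There is an absolute constant `C > 0` such that for all `d, t, m` with `t ≤ (d−1)/2`,
for `𝔰 = (S_1,…,S_m)` independent uniform `t`-element subsets of `{1,…,d−1}` and `x`
uniform on `{0,1}^{d−1}` independent of `𝔰`,
`E[|T_𝔰(x)|·(|T_𝔰(x)| − 1)] ≤ (m·2^{−t})²·exp(C·t²/d)`. -/
theorem expectation_Tset_second_moment :
    ∃ C : ℝ, 0 < C ∧ ∀ d t m : ℕ, 0 < d → 0 < t → 0 < m → 2 * t ≤ d - 1 →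
      let Ω : Finset (Fin m → Finset (Fin (d - 1))) :=
        Finset.univ.filter (fun 𝔰 => ∀ i, (𝔰 i).card = t)
      (∑ p ∈ Ω ×ˢ (Finset.univ : Finset (Fin (d - 1) → Bool)),
            ((Tset p.1 p.2).card : ℝ) * (((Tset p.1 p.2).card : ℝ) - 1))
          / ((Ω.card : ℝ) * 2 ^ (d - 1))
        ≤ ((m : ℝ) * (2 : ℝ)⁻¹ ^ t) ^ 2 * Real.exp (C * t ^ 2 / d) := by
  refine ⟨2, by norm_num, ?_⟩
  intro d t m hd ht hm htd Ω
  have hd3 : 3 ≤ d := by omega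
  refine le_trans (main_bound (d-1) t m ht hm htd) ?_
  refine mul_le_mul_of_nonneg_left ?_ (by positivity)
  have hd1 : (0:ℝ) < ((d-1:ℕ):ℝ) := by
    have : 0 < d - 1 := by omega
    exact_mod_cast this
  have h1 : (1 + (t:ℝ)/((d-1:ℕ):ℝ)) ≤ Real.exp ((t:ℝ)/((d-1:ℕ):ℝ)) := by
    have := Real.add_one_le_exp ((t:ℝ)/((d-1:ℕ):ℝ))
    linarith
  have h2 := pow_le_pow_left₀ (by positivity) h1 t
  refine h2.trans ?_
  rw [← Real.exp_nat_mul]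
  refine Real.exp_le_exp.mpr ?_
  have hd0 : (0:ℝ) < (d:ℝ) := by exact_mod_cast hd
  rw [← mul_div_assoc, div_le_div_iff₀ hd1 hd0]
  have hcast : ((d-1:ℕ):ℝ) = (d:ℝ) - 1 := by
    push_cast [Nat.cast_sub (by omega : 1 ≤ d)]
    ring
  rw [hcast]
  have htr : (1:ℝ) ≤ (t:ℝ) := by exact_mod_cast ht
  have hdr : (3:ℝ) ≤ (d:ℝ) := by exact_mod_cast hd3
  nlinarith [sq_nonneg ((t:ℝ))]
end

section
/- There is an absolute constant C > 0 such that for all positive integers d and t with t ≤ (d−1)/2 the following holds: if S and S' are chosen independently and uniformly at random among t-element subsets of {1,…,d−1}, and x is uniform on {0,1}^{d−1} and independent of (S,S'), then Pr[ x_j = 1 for all j ∈ S ∪ S' ] ≤ 2^{−2t}·exp(C·t²/d). Equivalently, E_{S,S'}[ 2^{−|S ∪ S'|} ] ≤ 2^{−2t}·exp(C·t²/d). -/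
open Finset

lemma pua_card_filter_card (n t : ℕ) :
    ((Finset.univ.filter fun S : Finset (Fin n) => S.card = t)).card = n.choose t := by
  have h : (Finset.univ.filter fun S : Finset (Fin n) => S.card = t)
      = Finset.powersetCard t Finset.univ := by
    rw [Finset.powersetCard_eq_filter, Finset.powerset_univ]
  rw [h, Finset.card_powersetCard, Finset.card_univ, Fintype.card_fin]

lemma pua_card_x (n : ℕ) (A : Finset (Fin n)) :
    (Finset.univ.filter fun x : Fin n → Bool => ∀ j ∈ A, x j = true).card
      = 2 ^ (n - A.card) := by
  have h : (Finset.univ.filter fun x : Fin n → Bool => ∀ j ∈ A, x j = true)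
      = Fintype.piFinset (fun j => if j ∈ A then {true} else Finset.univ) := by
    ext x
    simp only [Finset.mem_filter, Finset.mem_univ, true_and, Fintype.mem_piFinset]
    constructor
    · intro hx i
      by_cases hi : i ∈ A
      · simp [hi, hx i hi]
      · simp [hi]
    · intro hx j hj
      have := hx j
      simpa [hj] using this
  rw [h, Fintype.card_piFinset]
  have h2 : ∀ j : Fin n, (if j ∈ A then ({true} : Finset Bool) else Finset.univ).card
      = if j ∈ A then 1 else 2 := by
    intro j; by_cases hj : j ∈ A <;> simp [hj]
  rw [Finset.prod_congr rfl (fun j _ => h2 j), Finset.prod_ite, Finset.prod_const,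
    Finset.prod_const, one_pow, one_mul]
  congr 1
  have : (Finset.univ.filter fun j : Fin n => ¬ j ∈ A) = Aᶜ := by
    ext j; simp
  rw [this, Finset.card_compl, Fintype.card_fin]

lemma pua_card_supersets {n t j : ℕ} (hjt : j ≤ t) (T : Finset (Fin n)) (hT : T.card = j) :
    ((Finset.univ.filter fun S : Finset (Fin n) => S.card = t).filter fun S => T ⊆ S).card
      = (n - j).choose (t - j) := by
  have hb : ((Finset.univ.filter fun S : Finset (Fin n) => S.card = t).filter
        fun S => T ⊆ S).card = (Finset.powersetCard (t - j) Tᶜ).card := by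
    apply Finset.card_bij (fun S _ => S \ T)
    · intro S hS
      simp only [Finset.mem_filter, Finset.mem_univ, true_and] at hS
      rw [Finset.mem_powersetCard]
      refine ⟨?_, ?_⟩
      · intro x hx
        simp only [Finset.mem_sdiff] at hx
        simp [hx.2]
      · rw [Finset.card_sdiff_of_subset hS.2, hS.1, hT]
    · intro S hS S' hS' h
      simp only [Finset.mem_filter, Finset.mem_univ, true_and] at hS hS'
      have := congrArg (· ∪ T) h
      simpa [Finset.sdiff_union_of_subset hS.2, Finset.sdiff_union_of_subset hS'.2] using this
    · intro U hU
      rw [Finset.mem_powersetCard] at hU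
      have hdisj : Disjoint U T := by
        rw [Finset.disjoint_left]
        intro a haU haT
        have := hU.1 haU
        simp [haT] at this
      refine ⟨U ∪ T, ?_, ?_⟩
      · simp only [Finset.mem_filter, Finset.mem_univ, true_and]
        constructor
        · rw [Finset.card_union_of_disjoint hdisj, hU.2, hT]
          omega
        · exact Finset.subset_union_right
      · rw [Finset.union_sdiff_right, Finset.sdiff_eq_self_of_disjoint hdisj]
  rw [hb, Finset.card_powersetCard, Finset.card_compl, Fintype.card_fin, hT]

lemma pua_double_count {n t j : ℕ} (hjt : j ≤ t) :
    (∑ S ∈ Finset.univ.filter fun S : Finset (Fin n) => S.card = t,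
      ∑ S' ∈ Finset.univ.filter fun S : Finset (Fin n) => S.card = t,
        (S ∩ S').card.choose j)
      = n.choose j * ((n - j).choose (t - j)) ^ 2 := by
  set P := Finset.univ.filter fun S : Finset (Fin n) => S.card = t with hP
  have key : ∀ S S' : Finset (Fin n), (S ∩ S').card.choose j
      = ∑ T ∈ Finset.powersetCard j (Finset.univ : Finset (Fin n)),
          (if T ⊆ S ∧ T ⊆ S' then 1 else 0) := by
    intro S S'
    rw [← Finset.sum_filter]
    have h : (Finset.powersetCard j (Finset.univ : Finset (Fin n))).filter
        (fun T => T ⊆ S ∧ T ⊆ S') = Finset.powersetCard j (S ∩ S') := by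
      ext T
      simp only [Finset.mem_filter, Finset.mem_powersetCard, Finset.subset_univ, true_and,
        Finset.subset_inter_iff]
      tauto
    rw [h, Finset.sum_const, smul_eq_mul, mul_one, Finset.card_powersetCard]
  have hsplit : ∀ (T S S' : Finset (Fin n)), (if T ⊆ S ∧ T ⊆ S' then (1:ℕ) else 0)
      = (if T ⊆ S then 1 else 0) * (if T ⊆ S' then 1 else 0) := by
    intro T S S'
    by_cases h1 : T ⊆ S <;> by_cases h2 : T ⊆ S' <;> simp [h1, h2]
  have hcount : ∀ T : Finset (Fin n), T ∈ Finset.powersetCard j (Finset.univ : Finset (Fin n)) →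
      (∑ S ∈ P, if T ⊆ S then (1:ℕ) else 0) = (n - j).choose (t - j) := by
    intro T hT
    rw [Finset.mem_powersetCard] at hT
    rw [← Finset.sum_filter, Finset.sum_const, smul_eq_mul, mul_one]
    exact pua_card_supersets hjt T hT.2
  calc (∑ S ∈ P, ∑ S' ∈ P, (S ∩ S').card.choose j)
      = ∑ S ∈ P, ∑ S' ∈ P, ∑ T ∈ Finset.powersetCard j (Finset.univ : Finset (Fin n)),
          ((if T ⊆ S then (1:ℕ) else 0) * (if T ⊆ S' then 1 else 0)) := by
        refine Finset.sum_congr rfl fun S _ => Finset.sum_congr rfl fun S' _ => ?_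
        rw [key S S']
        exact Finset.sum_congr rfl fun T _ => hsplit T S S'
    _ = ∑ T ∈ Finset.powersetCard j (Finset.univ : Finset (Fin n)),
          ∑ S ∈ P, ∑ S' ∈ P,
          ((if T ⊆ S then (1:ℕ) else 0) * (if T ⊆ S' then 1 else 0)) := by
        exact (Finset.sum_congr rfl fun S _ => Finset.sum_comm).trans Finset.sum_comm
    _ = ∑ T ∈ Finset.powersetCard j (Finset.univ : Finset (Fin n)),
          ((n - j).choose (t - j)) ^ 2 := by
        refine Finset.sum_congr rfl fun T hT => ?_
        rw [← Finset.sum_mul_sum]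
        rw [hcount T hT, sq]
    _ = n.choose j * ((n - j).choose (t - j)) ^ 2 := by
        rw [Finset.sum_const, smul_eq_mul, Finset.card_powersetCard, Finset.card_univ,
          Fintype.card_fin]

lemma pua_choose_ratio {n t : ℕ} (htn : t ≤ n) :
    ∀ j, j ≤ t → (n - j).choose (t - j) * (n - t) ^ j ≤ n.choose t * t ^ j := by
  intro j
  induction j with
  | zero => simp
  | succ j ih =>
    intro hj
    have hjt : j ≤ t := by omega
    have step : (n - (j+1)).choose (t - (j+1)) * (n - t) ≤ (n - j).choose (t - j) * t := by
      have e1 : n - (j+1) = (n - j) - 1 := by omega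
      have e2 : t - (j+1) = (t - j) - 1 := by omega
      have key : (n - j) * ((n - j - 1).choose (t - j - 1)) = (n - j).choose (t - j) * (t - j) := by
        have := Nat.add_one_mul_choose_eq (n - j - 1) (t - j - 1)
        have h1 : n - j - 1 + 1 = n - j := by omega
        have h2 : t - j - 1 + 1 = t - j := by omega
        rwa [h1, h2] at this
      have hle1 : (n - (j+1)).choose (t - (j+1)) * (n - t)
          ≤ (n - j) * ((n - j - 1).choose (t - j - 1)) := by
        rw [e1, e2, mul_comm (n - j)]
        exact Nat.mul_le_mul_left _ (by omega)
      calc (n - (j+1)).choose (t - (j+1)) * (n - t)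
          ≤ (n - j).choose (t - j) * (t - j) := by rw [← key]; exact hle1
        _ ≤ (n - j).choose (t - j) * t := Nat.mul_le_mul_left _ (by omega)
    calc (n - (j+1)).choose (t - (j+1)) * (n - t) ^ (j+1)
        = ((n - (j+1)).choose (t - (j+1)) * (n - t)) * (n - t) ^ j := by ring
      _ ≤ ((n - j).choose (t - j) * t) * (n - t) ^ j := Nat.mul_le_mul_right _ step
      _ = ((n - j).choose (t - j) * (n - t) ^ j) * t := by ring
      _ ≤ (n.choose t * t ^ j) * t := Nat.mul_le_mul_right _ (ih hjt)
      _ = n.choose t * t ^ (j+1) := by ring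

/-- The key analytic bound: the double sum of `2^{|S∩S'|}` over `t`-subsets. -/
lemma pua_main_bound {n t d : ℕ} (ht : 0 < t) (h2t : 2 * t ≤ n) (hd : d = n + 1) :
    (∑ S ∈ Finset.univ.filter fun S : Finset (Fin n) => S.card = t,
      ∑ S' ∈ Finset.univ.filter fun S : Finset (Fin n) => S.card = t,
        (2:ℝ) ^ (S ∩ S').card)
      ≤ (n.choose t : ℝ) ^ 2 * Real.exp (4 * t ^ 2 / d) := by
  have htn : t ≤ n := by omega
  have hnt1 : 1 ≤ n - t := by omega
  set P := Finset.univ.filter fun S : Finset (Fin n) => S.card = t with hP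
  -- step 1: rewrite as a sum of binomial coefficients
  have hcardle : ∀ S ∈ P, ∀ S' ∈ P, (S ∩ S').card ≤ t := by
    intro S hS S' hS'
    simp only [hP, Finset.mem_filter, Finset.mem_univ, true_and] at hS
    calc (S ∩ S').card ≤ S.card := Finset.card_le_card Finset.inter_subset_left
      _ = t := hS
  have h2k : ∀ S ∈ P, ∀ S' ∈ P, (2:ℕ) ^ (S ∩ S').card
      = ∑ j ∈ Finset.range (t + 1), (S ∩ S').card.choose j := by
    intro S hS S' hS'
    set k := (S ∩ S').card with hk
    have hkt : k ≤ t := hcardle S hS S' hS'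
    rw [← Nat.sum_range_choose k]
    refine Finset.sum_subset (Finset.range_subset_range.2 (by omega)) ?_
    intro j _ hj2
    have hkj : k < j := by
      have := Finset.mem_range.not.1 hj2
      omega
    exact Nat.choose_eq_zero_of_lt hkj
  have hnat : (∑ S ∈ P, ∑ S' ∈ P, (2:ℕ) ^ (S ∩ S').card)
      = ∑ j ∈ Finset.range (t + 1), n.choose j * ((n - j).choose (t - j)) ^ 2 := by
    calc (∑ S ∈ P, ∑ S' ∈ P, (2:ℕ) ^ (S ∩ S').card)
        = ∑ S ∈ P, ∑ S' ∈ P, ∑ j ∈ Finset.range (t + 1), (S ∩ S').card.choose j := by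
          exact Finset.sum_congr rfl fun S hS => Finset.sum_congr rfl fun S' hS' =>
            h2k S hS S' hS'
      _ = ∑ j ∈ Finset.range (t + 1), ∑ S ∈ P, ∑ S' ∈ P, (S ∩ S').card.choose j := by
          exact (Finset.sum_congr rfl fun S _ => Finset.sum_comm).trans Finset.sum_comm
      _ = ∑ j ∈ Finset.range (t + 1), n.choose j * ((n - j).choose (t - j)) ^ 2 := by
          refine Finset.sum_congr rfl fun j hj => ?_
          exact pua_double_count (Nat.lt_succ_iff.1 (Finset.mem_range.1 hj))
  -- step 2: bound each term
  set N : ℝ := (n.choose t : ℝ) with hN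
  have hNpos : 0 < N := by
    rw [hN]; exact_mod_cast Nat.choose_pos htn
  set y : ℝ := ((n - t : ℕ) : ℝ) with hy
  have hypos : 0 < y := by rw [hy]; exact_mod_cast hnt1
  set x : ℝ := (t:ℝ) ^ 2 / y with hx
  have hxnn : 0 ≤ x := by positivity
  have hterm : ∀ j ≤ t, ((n.choose j * ((n - j).choose (t - j)) ^ 2 : ℕ) : ℝ)
      ≤ N ^ 2 * (x ^ j / (Nat.factorial j : ℝ)) := by
    intro j hjt
    have hid : (n.choose j * ((n - j).choose (t - j)) ^ 2 : ℕ)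
        = n.choose t * t.choose j * (n - j).choose (t - j) := by
      have := Nat.choose_mul (n := n) hjt
      rw [sq, ← mul_assoc, ← this]
    rw [hid]
    have hb1 : ((n - j).choose (t - j) : ℝ) ≤ N * (t:ℝ) ^ j / y ^ j := by
      rw [le_div_iff₀ (by positivity)]
      have := pua_choose_ratio htn j hjt
      calc ((n - j).choose (t - j) : ℝ) * y ^ j
          = (((n - j).choose (t - j) * (n - t) ^ j : ℕ) : ℝ) := by push_cast [hy]; ring
        _ ≤ ((n.choose t * t ^ j : ℕ) : ℝ) := by exact_mod_cast this
        _ = N * (t:ℝ) ^ j := by push_cast [hN]; ring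
    have hb2 : ((t.choose j : ℕ) : ℝ) ≤ (t:ℝ) ^ j / (Nat.factorial j : ℝ) := by
      exact_mod_cast Nat.choose_le_pow_div j t
    have hfac : (0:ℝ) < (Nat.factorial j : ℝ) := by exact_mod_cast Nat.factorial_pos j
    calc ((n.choose t * t.choose j * (n - j).choose (t - j) : ℕ) : ℝ)
        = N * (t.choose j : ℝ) * ((n - j).choose (t - j) : ℝ) := by push_cast [hN]; ring
      _ ≤ N * ((t:ℝ) ^ j / (Nat.factorial j : ℝ)) * (N * (t:ℝ) ^ j / y ^ j) := by
          apply mul_le_mul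
          · exact mul_le_mul_of_nonneg_left hb2 (le_of_lt hNpos)
          · exact hb1
          · positivity
          · positivity
      _ = N ^ 2 * (x ^ j / (Nat.factorial j : ℝ)) := by
          rw [hx, div_pow]
          field_simp
          ring
  -- step 3: sum up
  have hxle : x ≤ 4 * (t:ℝ) ^ 2 / d := by
    have hdpos : (0:ℝ) < d := by rw [hd]; positivity
    have hnat2 : d ≤ 4 * (n - t) := by omega
    rw [hx, div_le_div_iff₀ hypos hdpos]
    have : ((t:ℝ)^2) * d ≤ (t:ℝ)^2 * (4 * y) := by
      apply mul_le_mul_of_nonneg_left _ (by positivity)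
      rw [hy]
      exact_mod_cast hnat2
    linarith
  have hsum : ∑ j ∈ Finset.range (t + 1), x ^ j / (Nat.factorial j : ℝ) ≤ Real.exp x :=
    Real.sum_le_exp_of_nonneg hxnn (t + 1)
  calc (∑ S ∈ P, ∑ S' ∈ P, (2:ℝ) ^ (S ∩ S').card)
      = ((∑ S ∈ P, ∑ S' ∈ P, (2:ℕ) ^ (S ∩ S').card : ℕ) : ℝ) := by push_cast; ring
    _ = ((∑ j ∈ Finset.range (t + 1), n.choose j * ((n - j).choose (t - j)) ^ 2 : ℕ) : ℝ) := by
        rw [hnat]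
    _ = ∑ j ∈ Finset.range (t + 1),
          ((n.choose j * ((n - j).choose (t - j)) ^ 2 : ℕ) : ℝ) := by push_cast; ring
    _ ≤ ∑ j ∈ Finset.range (t + 1), N ^ 2 * (x ^ j / (Nat.factorial j : ℝ)) := by
        refine Finset.sum_le_sum fun j hj => ?_
        exact hterm j (by simpa using Nat.lt_succ_iff.1 (Finset.mem_range.1 hj))
    _ = N ^ 2 * ∑ j ∈ Finset.range (t + 1), x ^ j / (Nat.factorial j : ℝ) := by
        rw [Finset.mul_sum]
    _ ≤ N ^ 2 * Real.exp x := by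
        exact mul_le_mul_of_nonneg_left hsum (by positivity)
    _ ≤ N ^ 2 * Real.exp (4 * t ^ 2 / d) := by
        apply mul_le_mul_of_nonneg_left _ (by positivity)
        exact Real.exp_le_exp.2 hxle

/-- There is an absolute constant `C > 0` such that for all `d, t` with `t ≤ (d−1)/2`,
for `S, S'` independent uniform `t`-element subsets of `{1,…,d−1}` and `x` uniform on
`{0,1}^{d−1}` independent of `(S,S')`,
`Pr[x_j = 1 for all j ∈ S ∪ S'] ≤ 2^{−2t}·exp(C·t²/d)`; equivalently,
`E_{S,S'}[2^{−|S ∪ S'|}] ≤ 2^{−2t}·exp(C·t²/d)`. -/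
theorem prob_union_all_ones :
    ∃ C : ℝ, 0 < C ∧ ∀ d t : ℕ, 0 < d → 0 < t → 2 * t ≤ d - 1 →
      let Psets : Finset (Finset (Fin (d - 1))) :=
        Finset.univ.filter (fun S => S.card = t)
      ((((Psets ×ˢ Psets ×ˢ (Finset.univ : Finset (Fin (d - 1) → Bool))).filter
            (fun p => ∀ j ∈ p.1 ∪ p.2.1, p.2.2 j = true)).card : ℝ)
          / ((Psets.card : ℝ) ^ 2 * 2 ^ (d - 1))
        ≤ (2 : ℝ)⁻¹ ^ (2 * t) * Real.exp (C * t ^ 2 / d)) ∧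
      ((∑ S ∈ Psets, ∑ S' ∈ Psets, (2 : ℝ)⁻¹ ^ (S ∪ S').card) / ((Psets.card : ℝ) ^ 2)
        ≤ (2 : ℝ)⁻¹ ^ (2 * t) * Real.exp (C * t ^ 2 / d)) := by
  refine ⟨4, by norm_num, ?_⟩
  intro d t hd ht h2t
  intro Psets
  have hdn : d = (d - 1) + 1 := by omega
  have htn : t ≤ d - 1 := by omega
  have hPdef : Psets = Finset.univ.filter (fun S : Finset (Fin (d - 1)) => S.card = t) := rfl
  have hPcard : Psets.card = (d-1).choose t := by rw [hPdef]; exact pua_card_filter_card (d-1) t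
  have hNpos : (0:ℝ) < ((d-1).choose t : ℝ) := by exact_mod_cast Nat.choose_pos htn
  have hmem : ∀ S ∈ Psets, S.card = t := by
    intro S hS; rw [hPdef] at hS; simpa using hS
  have hunion : ∀ S ∈ Psets, ∀ S' ∈ Psets, (2:ℝ)⁻¹ ^ (S ∪ S').card
      = (2:ℝ)⁻¹ ^ (2*t) * (2:ℝ) ^ (S ∩ S').card := by
    intro S hS S' hS'
    have hu : (S ∪ S').card + (S ∩ S').card = 2 * t := by
      rw [Finset.card_union_add_card_inter, hmem S hS, hmem S' hS']; ring
    have h1 : ((2:ℝ)⁻¹) ^ (S ∩ S').card * (2:ℝ) ^ (S ∩ S').card = 1 := by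
      rw [← mul_pow]; norm_num
    calc (2:ℝ)⁻¹ ^ (S ∪ S').card
        = (2:ℝ)⁻¹ ^ (S ∪ S').card * ((2:ℝ)⁻¹ ^ (S ∩ S').card * (2:ℝ) ^ (S ∩ S').card) := by
          rw [h1, mul_one]
      _ = (2:ℝ)⁻¹ ^ ((S ∪ S').card + (S ∩ S').card) * (2:ℝ) ^ (S ∩ S').card := by
          rw [pow_add]; ring
      _ = (2:ℝ)⁻¹ ^ (2*t) * (2:ℝ) ^ (S ∩ S').card := by rw [hu]
  have hsum2 : (∑ S ∈ Psets, ∑ S' ∈ Psets, (2:ℝ)⁻¹ ^ (S ∪ S').card)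
      = (2:ℝ)⁻¹ ^ (2*t) * ∑ S ∈ Psets, ∑ S' ∈ Psets, (2:ℝ) ^ (S ∩ S').card := by
    rw [Finset.mul_sum]
    refine Finset.sum_congr rfl fun S hS => ?_
    rw [Finset.mul_sum]
    exact Finset.sum_congr rfl fun S' hS' => hunion S hS S' hS'
  have hbound2 : (∑ S ∈ Psets, ∑ S' ∈ Psets, (2:ℝ) ^ (S ∩ S').card)
      ≤ ((d-1).choose t : ℝ) ^ 2 * Real.exp (4 * t ^ 2 / d) := by
    rw [hPdef]
    exact pua_main_bound ht h2t hdn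
  have hsumnn : (0:ℝ) ≤ ∑ S ∈ Psets, ∑ S' ∈ Psets, (2:ℝ) ^ (S ∩ S').card := by
    apply Finset.sum_nonneg; intro S _; apply Finset.sum_nonneg; intro S' _; positivity
  have part2 : (∑ S ∈ Psets, ∑ S' ∈ Psets, (2 : ℝ)⁻¹ ^ (S ∪ S').card) / ((Psets.card : ℝ) ^ 2)
      ≤ (2 : ℝ)⁻¹ ^ (2 * t) * Real.exp ((4:ℝ) * t ^ 2 / d) := by
    rw [hPcard, div_le_iff₀ (by positivity), hsum2]
    calc (2:ℝ)⁻¹ ^ (2*t) * ∑ S ∈ Psets, ∑ S' ∈ Psets, (2:ℝ) ^ (S ∩ S').card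
        ≤ (2:ℝ)⁻¹ ^ (2*t) * (((d-1).choose t : ℝ) ^ 2 * Real.exp (4 * t ^ 2 / d)) :=
          mul_le_mul_of_nonneg_left hbound2 (by positivity)
      _ = (2:ℝ)⁻¹ ^ (2*t) * Real.exp ((4:ℝ) * t ^ 2 / d) * ((d-1).choose t : ℝ) ^ 2 := by
          push_cast; ring
  refine ⟨?_, part2⟩
  -- first part
  have hcard1 : (((Psets ×ˢ Psets ×ˢ (Finset.univ : Finset (Fin (d - 1) → Bool))).filter
        (fun p => ∀ j ∈ p.1 ∪ p.2.1, p.2.2 j = true)).card)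
      = ∑ S ∈ Psets, ∑ S' ∈ Psets, 2 ^ ((d-1) - (S ∪ S').card) := by
    rw [Finset.card_filter, Finset.sum_product]
    refine Finset.sum_congr rfl fun S _ => ?_
    rw [Finset.sum_product]
    refine Finset.sum_congr rfl fun S' _ => ?_
    rw [← Finset.card_filter]
    exact pua_card_x (d-1) (S ∪ S')
  have hpow : ∀ S S' : Finset (Fin (d - 1)), ((2:ℝ)) ^ ((d-1) - (S ∪ S').card)
      = 2 ^ (d-1) * (2:ℝ)⁻¹ ^ (S ∪ S').card := by
    intro S S'
    have hu : (S ∪ S').card ≤ d - 1 := by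
      simpa using Finset.card_le_univ (S ∪ S')
    have h1 : (2:ℝ) ^ ((d-1) - (S ∪ S').card) * 2 ^ (S ∪ S').card = 2 ^ (d-1) := by
      rw [← pow_add]; congr 1; omega
    have h2 : ((2:ℝ) ^ (S ∪ S').card) ≠ 0 := by positivity
    rw [inv_pow]
    field_simp
    linarith [h1]
  have hcast : ((((Psets ×ˢ Psets ×ˢ (Finset.univ : Finset (Fin (d - 1) → Bool))).filter
        (fun p => ∀ j ∈ p.1 ∪ p.2.1, p.2.2 j = true)).card : ℝ))
      = 2 ^ (d-1) * ∑ S ∈ Psets, ∑ S' ∈ Psets, (2:ℝ)⁻¹ ^ (S ∪ S').card := by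
    rw [hcard1]
    push_cast
    rw [Finset.mul_sum]
    refine Finset.sum_congr rfl fun S _ => ?_
    rw [Finset.mul_sum]
    exact Finset.sum_congr rfl fun S' _ => hpow S S'
  rw [hcast]
  have h2n : ((2:ℝ) ^ (d-1)) ≠ 0 := by positivity
  rw [show ((Psets.card : ℝ) ^ 2 * 2 ^ (d-1)) = 2 ^ (d-1) * (Psets.card : ℝ) ^ 2 from mul_comm _ _,
    mul_div_mul_left _ _ h2n]
  exact part2
end

section
/- Let d, t, m be positive integers with t ≤ d−1 and let 𝔰 = (S_1,…,S_m) be a fixed sequence of t-element subsets of {1,…,d−1}. Then for every natural number k and every k-junta g : {0,1}^{d−1} × {0,1}^m → {0,1}, Pr_{(x,y) uniform}[ f_𝔰(x,y) ≠ g(x,y) ] ≥ ( Pr_x[ |T_𝔰(x)| = 1 ] − k·2^{−t} ) / 2. -/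
/-- `fS 𝔰 x y = 1` if `|T_𝔰(x)| ≥ 2`, `0` if `|T_𝔰(x)| = 0`, and `y_i` if `T_𝔰(x) = {i}`. -/
def fS {n m : ℕ} (𝔰 : Fin m → Finset (Fin n)) (x : Fin n → Bool) (y : Fin m → Bool) : Bool :=
  if h : (Tset 𝔰 x).card = 1 then
    y ((Tset 𝔰 x).min' (Finset.card_pos.mp (h ▸ Nat.one_pos)))
  else
    decide (2 ≤ (Tset 𝔰 x).card)

/-- `g : {0,1}^n × {0,1}^m → {0,1}` is a `k`-junta if it depends on at most `k` of its
`n + m` coordinates. -/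
def IsJunta2 {n m : ℕ} (g : (Fin n → Bool) → (Fin m → Bool) → Bool) (k : ℕ) : Prop :=
  ∃ J : Finset (Sum (Fin n) (Fin m)), J.card ≤ k ∧
    ∀ (x x' : Fin n → Bool) (y y' : Fin m → Bool),
      (∀ i, Sum.inl i ∈ J → x i = x' i) → (∀ j, Sum.inr j ∈ J → y j = y' j) →
        g x y = g x' y'

lemma count_fixed {n : ℕ} (S : Finset (Fin n)) :
    (Finset.univ.filter (fun x : Fin n → Bool => ∀ l ∈ S, x l = true)).card
      = 2 ^ (n - S.card) := by
  have h1 : 2 ^ (n - S.card) = (Finset.univ : Finset ({l // l ∈ Sᶜ} → Bool)).card := by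
    simp [Finset.card_univ, Fintype.card_fun, Finset.card_compl]
  rw [h1]
  refine Finset.card_bij' (fun x _ => fun l => x l.1)
    (fun f _ => fun l => if h : l ∈ S then true else f ⟨l, by simpa using h⟩)
    (fun a _ => Finset.mem_univ _) ?_ ?_ ?_
  · intro f hf
    simp only [Finset.mem_filter, Finset.mem_univ, true_and]
    intro l hl
    simp [hl]
  · intro x hx
    funext l
    by_cases h : l ∈ S
    · simp only [Finset.mem_filter, Finset.mem_univ, true_and] at hx
      simp [h, (hx l h).symm]
    · simp [h]
  · intro f hf
    funext l
    have : l.1 ∉ S := Finset.mem_compl.mp l.2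
    simp [this]

/-- For every fixed sequence `𝔰` of `t`-element subsets of `{1,…,d−1}`, every `k` and every
`k`-junta `g`, `Pr_{(x,y)}[f_𝔰(x,y) ≠ g(x,y)] ≥ (Pr_x[|T_𝔰(x)| = 1] − k·2^{−t})/2`. -/
theorem junta_disagreement (d t m : ℕ) (hd : 0 < d) (ht : 0 < t) (hm : 0 < m)
    (htd : t ≤ d - 1)
    (𝔰 : Fin m → Finset (Fin (d - 1))) (h𝔰 : ∀ i, (𝔰 i).card = t)
    (k : ℕ) (g : (Fin (d - 1) → Bool) → (Fin m → Bool) → Bool) (hg : IsJunta2 g k) :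
    (((Finset.univ.filter
          (fun x : Fin (d - 1) → Bool => (Tset 𝔰 x).card = 1)).card : ℝ) / 2 ^ (d - 1)
        - (k : ℝ) * (2 : ℝ)⁻¹ ^ t) / 2
      ≤ ((Finset.univ.filter
          (fun p : (Fin (d - 1) → Bool) × (Fin m → Bool) =>
            fS 𝔰 p.1 p.2 ≠ g p.1 p.2)).card : ℝ) / (2 ^ (d - 1) * 2 ^ m) := by

  obtain ⟨J, hJcard, hJ⟩ := hg
  classical
  set Jy : Finset (Fin m) := Finset.univ.filter (fun j => Sum.inr j ∈ J) with hJy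
  have hJyk : Jy.card ≤ k :=
    le_trans (Finset.card_le_card_of_injOn Sum.inr
      (fun j hj => (Finset.mem_filter.mp hj).2)
      (fun _ _ _ _ h => Sum.inr.inj h)) hJcard
  set Good : Finset (Fin (d - 1) → Bool) :=
    Finset.univ.filter
      (fun x => (Tset 𝔰 x).card = 1 ∧ ∀ j ∈ Tset 𝔰 x, j ∉ Jy) with hGood
  set A := (Finset.univ.filter
      (fun x : Fin (d - 1) → Bool => (Tset 𝔰 x).card = 1)).card with hA
  set B := (Finset.univ.filter
      (fun p : (Fin (d - 1) → Bool) × (Fin m → Bool) => fS 𝔰 p.1 p.2 ≠ g p.1 p.2)).card with hB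
  -- Step 1 : A ≤ Good.card + k * 2 ^ (d - 1 - t)
  have step1 : A ≤ Good.card + k * 2 ^ (d - 1 - t) := by
    have hsub : Finset.univ.filter (fun x : Fin (d - 1) → Bool => (Tset 𝔰 x).card = 1)
        ⊆ Good ∪ Jy.biUnion (fun j =>
            Finset.univ.filter (fun x : Fin (d - 1) → Bool => j ∈ Tset 𝔰 x)) := by
      intro x hx
      have hx1 : (Tset 𝔰 x).card = 1 := (Finset.mem_filter.mp hx).2
      by_cases hG : ∀ j ∈ Tset 𝔰 x, j ∉ Jy
      · exact Finset.mem_union_left _ (Finset.mem_filter.mpr ⟨Finset.mem_univ _, hx1, hG⟩)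
      · push_neg at hG
        obtain ⟨j, hj1, hj2⟩ := hG
        exact Finset.mem_union_right _ (Finset.mem_biUnion.mpr
          ⟨j, hj2, Finset.mem_filter.mpr ⟨Finset.mem_univ _, hj1⟩⟩)
    calc A ≤ (Good ∪ Jy.biUnion (fun j =>
            Finset.univ.filter (fun x : Fin (d - 1) → Bool => j ∈ Tset 𝔰 x))).card :=
          Finset.card_le_card hsub
      _ ≤ Good.card + (Jy.biUnion (fun j =>
            Finset.univ.filter (fun x : Fin (d - 1) → Bool => j ∈ Tset 𝔰 x))).card :=
          Finset.card_union_le _ _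
      _ ≤ Good.card + ∑ j ∈ Jy,
            (Finset.univ.filter (fun x : Fin (d - 1) → Bool => j ∈ Tset 𝔰 x)).card :=
          Nat.add_le_add_left (Finset.card_biUnion_le) _
      _ = Good.card + ∑ j ∈ Jy, 2 ^ (d - 1 - t) := by
          congr 1
          refine Finset.sum_congr rfl (fun j _ => ?_)
          have heq : (Finset.univ.filter (fun x : Fin (d - 1) → Bool => j ∈ Tset 𝔰 x))
              = Finset.univ.filter (fun x : Fin (d - 1) → Bool => ∀ l ∈ 𝔰 j, x l = true) := by
            refine Finset.filter_congr (fun x _ => ?_)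
            simp [Tset]
          rw [heq, count_fixed, h𝔰 j]
      _ = Good.card + Jy.card * 2 ^ (d - 1 - t) := by rw [Finset.sum_const, smul_eq_mul]
      _ ≤ Good.card + k * 2 ^ (d - 1 - t) :=
          Nat.add_le_add_left (Nat.mul_le_mul_right _ hJyk) _
  -- Step 2 : for each good x, at least half the y's disagree
  have step2 : ∀ x ∈ Good, 2 ^ m ≤
      2 * (Finset.univ.filter (fun y : Fin m → Bool => fS 𝔰 x y ≠ g x y)).card := by
    intro x hx
    obtain ⟨-, hx1, hxJ⟩ := Finset.mem_filter.mp hx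
    obtain ⟨i, hTi⟩ := Finset.card_eq_one.mp hx1
    have hiJ : Sum.inr i ∉ J := by
      have := hxJ i (by simp [hTi])
      simpa [hJy] using this
    have hf : ∀ y : Fin m → Bool, fS 𝔰 x y = y i := by
      intro y
      rw [fS, dif_pos hx1]
      have hne : (Tset 𝔰 x).Nonempty := Finset.card_pos.mp (by omega)
      have hmin : (Tset 𝔰 x).min' hne = i := by
        have h2 := (Tset 𝔰 x).min'_mem hne
        have hmem_i : i ∈ Tset 𝔰 x := by simp [hTi]
        exact Finset.card_le_one.mp (le_of_eq hx1) _ h2 _ hmem_i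
      exact congrArg y hmin
    set flip : (Fin m → Bool) → (Fin m → Bool) :=
      fun y => Function.update y i (!(y i)) with hflip
    have hflip2 : ∀ y, flip (flip y) = y := by
      intro y
      simp [hflip, Function.update_idem, Function.update_self, Function.update_eq_self]
    have hagree : (Finset.univ.filter (fun y : Fin m → Bool => fS 𝔰 x y = g x y)).card ≤
        (Finset.univ.filter (fun y : Fin m → Bool => fS 𝔰 x y ≠ g x y)).card := by
      refine Finset.card_le_card_of_injOn flip ?_ ?_
      · intro y hy
        have hyg : fS 𝔰 x y = g x y := (Finset.mem_filter.mp hy).2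
        have hgy : g x (flip y) = g x y := by
          refine (hJ x x (flip y) y (fun _ _ => rfl) (fun j hj => ?_))
          have hji : j ≠ i := fun h => hiJ (h ▸ hj)
          simp [hflip, Function.update_of_ne hji]
        refine Finset.mem_filter.mpr ⟨Finset.mem_univ _, ?_⟩
        rw [hf, hgy, ← hyg, hf y]
        simp [hflip]
      · intro y1 _ y2 _ h
        have h' := congrArg flip h
        rwa [hflip2, hflip2] at h'
    have hsplit : (Finset.univ.filter (fun y : Fin m → Bool => fS 𝔰 x y = g x y)).card +
        (Finset.univ.filter (fun y : Fin m → Bool => fS 𝔰 x y ≠ g x y)).card = 2 ^ m := by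
      rw [Finset.card_filter_add_card_filter_not (fun y => fS 𝔰 x y = g x y)]
      simp [Finset.card_univ]
    omega
  -- Step 3 : B counted fiberwise
  have B_eq : B = ∑ x : Fin (d - 1) → Bool,
      (Finset.univ.filter (fun y : Fin m → Bool => fS 𝔰 x y ≠ g x y)).card := by
    rw [hB]
    simp [Finset.card_filter, Fintype.sum_prod_type]
  have step3 : Good.card * 2 ^ m ≤ 2 * B := by
    calc Good.card * 2 ^ m = ∑ _x ∈ Good, 2 ^ m := by
          rw [Finset.sum_const, smul_eq_mul]
      _ ≤ ∑ x ∈ Good,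
            2 * (Finset.univ.filter (fun y : Fin m → Bool => fS 𝔰 x y ≠ g x y)).card :=
          Finset.sum_le_sum step2
      _ ≤ ∑ x : Fin (d - 1) → Bool,
            2 * (Finset.univ.filter (fun y : Fin m → Bool => fS 𝔰 x y ≠ g x y)).card :=
          Finset.sum_le_sum_of_subset (Finset.subset_univ _)
      _ = 2 * B := by rw [B_eq, Finset.mul_sum]
  -- key natural-number inequality
  have key : A * 2 ^ m ≤ 2 * B + k * 2 ^ (d - 1 - t) * 2 ^ m := by
    calc A * 2 ^ m ≤ (Good.card + k * 2 ^ (d - 1 - t)) * 2 ^ m :=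
          Nat.mul_le_mul_right _ step1
      _ = Good.card * 2 ^ m + k * 2 ^ (d - 1 - t) * 2 ^ m := by ring
      _ ≤ 2 * B + k * 2 ^ (d - 1 - t) * 2 ^ m := Nat.add_le_add_right step3 _
  -- pass to the reals
  have keyR : (A : ℝ) * 2 ^ m ≤ 2 * B + (k : ℝ) * 2 ^ (d - 1 - t) * 2 ^ m := by
    exact_mod_cast key
  have hPpos : (0 : ℝ) < 2 ^ (d - 1) := by positivity
  have hP : (2 : ℝ) ^ (d - 1) = 2 ^ (d - 1 - t) * 2 ^ t := by
    rw [← pow_add, Nat.sub_add_cancel htd]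
  rw [div_le_div_iff₀ (by norm_num : (0:ℝ) < 2) (by positivity)]
  have h2t : ((2:ℝ)⁻¹) ^ t = 2 ^ (d - 1 - t) / 2 ^ (d - 1) := by
    rw [inv_pow, eq_div_iff (ne_of_gt hPpos), hP]
    field_simp
  have expand : ((A : ℝ) / 2 ^ (d - 1) - (k : ℝ) * (2 : ℝ)⁻¹ ^ t) * (2 ^ (d - 1) * 2 ^ m)
      = (A : ℝ) * 2 ^ m - (k : ℝ) * 2 ^ (d - 1 - t) * 2 ^ m := by
    rw [h2t]
    field_simp
  rw [expand]
  linarith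
end
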